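/- arXiv:2508.07571 — 4 statements merged into one kernel-verified Lean document; each statement's English description precedes it below -/
import Mathlib

section
/- For the binary sparse in-context regression task with n = k = 1, σ_ε = 0, and single in-context example (x, xᵀw*) with x ~ N(0, I_d), the greedy-decoding prediction satisfies, for every reasoning length t ≥ 1, P( w_t^{greedy} = w* ) ≤ 1/2^{d-1} + 2/d. -/
open Matrix Finset

/-- One gradient step for in-context regression. -/
noncomputable def gradStep {n d : ℕ} (X : Matrix (Fin n) (Fin d) ℝ) (y : Fin n → ℝ)
    (w : Fin d → ℝ) : Fin d → ℝ :=
  w - (1 / (n : ℝ)) • (Xᵀ.mulVec (X.mulVec w - y))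

/-- ClipNorm: clip entries at 0 and normalize to a probability vector. -/
noncomputable def clipNorm {d : ℕ} (v : Fin d → ℝ) : Fin d → ℝ :=
  fun i => max (v i) 0 / ∑ i', max (v i') 0

/-- 0/1 indicator vector of a finset of coordinates. -/
def indicatorVec {d : ℕ} (S : Finset (Fin d)) : Fin d → ℝ := fun i => if i ∈ S then 1 else 0

open scoped Classical in
/-- Probability of obtaining support `S` when sampling `k` distinct indices without
replacement according to the probability vector `q`. -/
noncomputable def sampleWoR {d : ℕ} (k : ℕ) (q : Fin d → ℝ) (S : Finset (Fin d)) : ℝ :=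
  ∑ e : Fin k → Fin d,
    if Function.Injective e ∧ Finset.image e Finset.univ = S then
      ∏ i : Fin k, q (e i) / (1 - ∑ j ∈ Finset.univ.filter (fun j => j < i), q (e j))
    else 0

/-- One-step transition probability of the sampling-decoding chain. -/
noncomputable def transProb {n d : ℕ} (X : Matrix (Fin n) (Fin d) ℝ) (y : Fin n → ℝ)
    (k : ℕ) (S S' : Finset (Fin d)) : ℝ :=
  sampleWoR k (clipNorm (gradStep X y (indicatorVec S))) S'

/-- Distribution of the sampling-decoding chain after `t` steps, started at `w₀ = 0`. -/
noncomputable def chainProb {n d : ℕ} (X : Matrix (Fin n) (Fin d) ℝ) (y : Fin n → ℝ)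
    (k : ℕ) : ℕ → Finset (Fin d) → ℝ
  | 0, S => if S = ∅ then 1 else 0
  | t + 1, S => ∑ S' : Finset (Fin d), chainProb X y k t S' * transProb X y k S' S

/-- `S` consists of `k` indices carrying the `k` largest values of `q`. -/
def IsTopK {d : ℕ} (k : ℕ) (q : Fin d → ℝ) (S : Finset (Fin d)) : Prop :=
  S.card = k ∧ ∀ i ∈ S, ∀ j ∉ S, q j ≤ q i

/-- Greedy-decoding iterates, with a tie-breaking top-k selector `sel`. -/
noncomputable def greedyIter {n d : ℕ} (X : Matrix (Fin n) (Fin d) ℝ) (y : Fin n → ℝ)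
    (k : ℕ) (sel : (Fin d → ℝ) → Finset (Fin d)) : ℕ → Finset (Fin d)
  | 0 => ∅
  | t + 1 => sel (clipNorm (gradStep X y (indicatorVec (greedyIter X y k sel t))))

/-- Number of votes for `S` among the `N` sampled reasoning outcomes `g`. -/
def countVotes {d : ℕ} {N : ℕ} (g : Fin N → Finset (Fin d)) (S : Finset (Fin d)) : ℕ :=
  (Finset.univ.filter fun j => g j = S).card

open scoped Classical in
/-- Probability that the majority-vote selector `vote` applied to `N` i.i.d. samples from
the distribution `f` on supports returns `Sstar`. -/
noncomputable def mvRecoverProb {d : ℕ} (f : Finset (Fin d) → ℝ) (N : ℕ)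
    (vote : (Fin N → Finset (Fin d)) → Finset (Fin d)) (Sstar : Finset (Fin d)) : ℝ :=
  ∑ g : Fin N → Finset (Fin d), (∏ j, f (g j)) * (if vote g = Sstar then 1 else 0)

open MeasureTheory ProbabilityTheory
open scoped ENNReal

/-!
Write `w* = e_a`. After the first step the greedy iterate is the argmax `m` or the argmin `l` of
`x` (according to the sign of `y = x a`), and from `e_m` (resp. `e_l`) the gradient step gives
`e_m + c • x` with `c = x a - x m < 0` (resp. `e_l + c • x` with `c > 0`), whose largest positive
entry off the current support sits at `l` (resp. `m`). So the iterates never leave `{m, l}`, and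
greedy decoding can only succeed if `a` is the argmax or the argmin of `x`, or if `x` is
degenerate: it has a tie or `x a = 0` (null events), or all its coordinates have the same sign
(probability `2 ⋅ 2⁻ᵈ`). By exchangeability of the coordinates, `a` is the strict argmax with
probability at most `1/d`, and likewise for the argmin.
-/

section SymmetricLaw

variable {μ : Measure ℝ}

lemma measure_Iic_zero_eq_Ici_zero (hμ : μ.map (fun x => -x) = μ) :
    μ (Set.Iic 0) = μ (Set.Ici 0) := by
  conv_rhs => rw [← hμ]
  rw [Measure.map_apply measurable_neg measurableSet_Ici]
  simp

lemma measure_Ici_zero_eq_inv_two [IsProbabilityMeasure μ] [NullSingletonClass μ]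
    (hμ : μ.map (fun x => -x) = μ) : μ (Set.Ici 0) = 2⁻¹ := by
  have h : μ (Set.Ici 0) + μ (Set.Iic 0) = 1 := by
    rw [← measure_congr Iio_ae_eq_Iic, ← Set.compl_Ici,
      measure_add_measure_compl measurableSet_Ici, measure_univ]
  rw [measure_Iic_zero_eq_Ici_zero hμ, ← two_mul] at h
  exact ENNReal.eq_inv_of_mul_eq_one_left (by rwa [mul_comm])

lemma pi_setOf_forall_nonneg {ι : Type*} [Fintype ι] [IsProbabilityMeasure μ]
    [NullSingletonClass μ] (hμ : μ.map (fun x => -x) = μ) :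
    Measure.pi (fun _ : ι => μ) {x | ∀ i, 0 ≤ x i} = 2⁻¹ ^ Fintype.card ι := by
  have h : {x : ι → ℝ | ∀ i, 0 ≤ x i} = Set.univ.pi fun _ => Set.Ici 0 := by
    ext; simp only [Set.mem_ofPred_eq, Set.mem_univ_pi, Set.mem_Ici]
  rw [h, Measure.pi_pi]
  simp [measure_Ici_zero_eq_inv_two hμ]

lemma pi_setOf_forall_nonpos {ι : Type*} [Fintype ι] [IsProbabilityMeasure μ]
    [NullSingletonClass μ] (hμ : μ.map (fun x => -x) = μ) :
    Measure.pi (fun _ : ι => μ) {x | ∀ i, x i ≤ 0} = 2⁻¹ ^ Fintype.card ι := by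
  have h : {x : ι → ℝ | ∀ i, x i ≤ 0} = Set.univ.pi fun _ => Set.Iic 0 := by
    ext; simp only [Set.mem_ofPred_eq, Set.mem_univ_pi, Set.mem_Iic]
  rw [h, Measure.pi_pi]
  simp [measure_Iic_zero_eq_Ici_zero hμ, measure_Ici_zero_eq_inv_two hμ]

end SymmetricLaw

section Pi

variable {ι α : Type*} [Fintype ι] [MeasurableSpace α] (μ : Measure α)

lemma pi_setOf_eq_null [MeasurableEq α] [SigmaFinite μ] [NullSingletonClass μ]
    {i j : ι} (hij : i ≠ j) : Measure.pi (fun _ : ι => μ) {x | x i = x j} = 0 := by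
  classical
  set p : ι → Prop := (· = i)
  have hB : MeasurableSet {q : ({k // p k} → α) × ({k // ¬ p k} → α) |
      q.1 ⟨i, rfl⟩ = q.2 ⟨j, hij.symm⟩} :=
    measurableSet_eq_fun ((measurable_pi_apply _).comp measurable_fst)
      ((measurable_pi_apply _).comp measurable_snd)
  change Measure.pi _ (MeasurableEquiv.piEquivPiSubtypeProd (fun _ : ι => α) p ⁻¹'
    {q | q.1 ⟨i, rfl⟩ = q.2 ⟨j, hij.symm⟩}) = 0
  rw [(measurePreserving_piEquivPiSubtypeProd (fun _ : ι => μ) p).measure_preimage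
    hB.nullMeasurableSet, Measure.prod_apply hB]
  have hslice : ∀ u : {k // p k} → α, Measure.pi (fun _ : {k // ¬ p k} => μ)
      (Prod.mk u ⁻¹' {q | q.1 ⟨i, rfl⟩ = q.2 ⟨j, hij.symm⟩}) = 0 := fun u => by
    simpa [eq_comm] using
      Measure.pi_hyperplane (fun _ : {k // ¬ p k} => μ) ⟨j, hij.symm⟩ (u ⟨i, rfl⟩)
  simp only [hslice, lintegral_zero]

lemma pi_setOf_not_injective_null [MeasurableEq α] [SigmaFinite μ]
    [NullSingletonClass μ] : Measure.pi (fun _ : ι => μ) {x | ¬ Function.Injective x} = 0 := by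
  have h : {x : ι → α | ¬ Function.Injective x} ⊆ ⋃ i, ⋃ j, ⋃ (_ : i ≠ j), {x | x i = x j} := by
    intro x hx
    simp only [Function.Injective, not_forall] at hx
    obtain ⟨i, j, hx, hij⟩ := hx
    exact Set.mem_iUnion₂.2 ⟨i, j, Set.mem_iUnion.2 ⟨hij, hx⟩⟩
  exact measure_mono_null h (measure_iUnion_null fun i => measure_iUnion_null fun j =>
    measure_iUnion_null fun hij => pi_setOf_eq_null μ hij)

lemma pi_setOf_forall_rel_le_inv_card [IsProbabilityMeasure μ]
    {R : α → α → Prop} (hR : MeasurableSet {p : α × α | R p.1 p.2})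
    (hasymm : ∀ s t, R s t → ¬ R t s) (b : ι) :
    Measure.pi (fun _ : ι => μ) {x | ∀ j ≠ b, R (x j) (x b)} ≤ (Fintype.card ι : ℝ≥0∞)⁻¹ := by
  classical
  set E : ι → Set (ι → α) := fun i => {x | ∀ j ≠ i, R (x j) (x i)}
  have hE : ∀ i, MeasurableSet (E i) := fun i => by
    simp only [E, Set.ofPred_forall]
    exact .iInter fun j => .iInter fun _ =>
      hR.preimage (f := fun x : ι → α => (x j, x i))
        ((measurable_pi_apply j).prodMk (measurable_pi_apply i))
  have hdisj : Pairwise (Function.onFun Disjoint E) := fun i i' hii' =>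
    Set.disjoint_left.2 fun x hx hx' => hasymm _ _ (hx i' hii'.symm) (hx' i hii')
  have hswap : ∀ i, Measure.pi (fun _ : ι => μ) (E i) = Measure.pi (fun _ : ι => μ) (E b) := by
    intro i
    have hmp := measurePreserving_arrowCongr' (fun _ : ι => μ) (fun _ : ι => μ)
      (Equiv.swap i b) (MeasurableEquiv.refl α) fun _ => MeasurePreserving.id μ
    rw [← hmp.measure_preimage (hE b).nullMeasurableSet]
    congr 1
    ext x
    simp only [ne_eq, Set.mem_ofPred_eq, MeasurableEquiv.arrowCongr', Equiv.arrowCongr',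
      MeasurableEquiv.coe_mk, Set.preimage_ofPred_eq, Equiv.arrowCongr_apply, EquivLike.coe_coe,
      Equiv.symm_swap, Function.comp_apply, MeasurableEquiv.refl_apply, Equiv.swap_apply_right, E]
    rw [← (Equiv.swap i b).forall_congr_right]
    simp [Equiv.swap_apply_eq_iff]
  have hsum : (Fintype.card ι : ℝ≥0∞) * Measure.pi (fun _ : ι => μ) (E b) ≤ 1 := by
    calc (Fintype.card ι : ℝ≥0∞) * Measure.pi (fun _ : ι => μ) (E b)
        = ∑ i, Measure.pi (fun _ : ι => μ) (E i) := by simp [hswap]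
      _ = Measure.pi (fun _ : ι => μ) (⋃ i, E i) :=
          (measure_iUnion hdisj hE ▸ tsum_fintype _).symm
      _ ≤ 1 := prob_le_one
  rwa [ENNReal.le_inv_iff_mul_le, mul_comm]

end Pi

lemma dotProduct_indicatorVec_singleton {d : ℕ} (x : Fin d → ℝ) (a : Fin d) :
    x ⬝ᵥ indicatorVec {a} = x a := by
  simp [dotProduct, indicatorVec]

lemma gradStep_single_row {d : ℕ} (x : Fin d → ℝ) (y : Fin 1 → ℝ) (w : Fin d → ℝ) :
    gradStep (of fun _ : Fin 1 => x) y w = w + (y 0 - x ⬝ᵥ w) • x := by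
  ext i
  simp only [gradStep, Nat.cast_one, div_one, one_smul, Pi.sub_apply, Pi.add_apply, Pi.smul_apply,
    smul_eq_mul, mulVec, dotProduct, Fin.sum_univ_one, transpose_apply, of_apply]
  ring

lemma clipNorm_lt_clipNorm {d : ℕ} {v : Fin d → ℝ} {i j : Fin d}
    (h : max (v i) 0 < max (v j) 0) : clipNorm v i < clipNorm v j := by
  have hsum : 0 < ∑ k, max (v k) 0 := lt_of_lt_of_le ((le_max_right _ _).trans_lt h)
    (single_le_sum (f := fun k => max (v k) 0) (fun k _ => le_max_right _ _) (mem_univ j))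
  exact div_lt_div_of_pos_right h hsum

lemma IsTopK.exists_mem_eq_singleton {d : ℕ} {v : Fin d → ℝ} {S A : Finset (Fin d)} {j : Fin d}
    (hS : IsTopK 1 (clipNorm v) S) (hjA : j ∈ A) (hj : 0 < v j) (hlt : ∀ i ∉ A, v i < v j) :
    ∃ i ∈ A, S = {i} := by
  obtain ⟨i, rfl⟩ := card_eq_one.mp hS.1
  refine ⟨i, ?_, rfl⟩
  by_contra hiA
  have hij : i ≠ j := fun h => hiA (h ▸ hjA)
  refine (hS.2 i (mem_singleton_self i) j (by simpa using hij.symm)).not_gt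
    (clipNorm_lt_clipNorm ?_)
  rw [max_eq_left hj.le]
  exact max_lt (hlt i hiA) hj

section Greedy

variable {d : ℕ} {x : Fin d → ℝ} {a m l : Fin d}

lemma isTopK_gradStep_eq_argmax_or_argmin (hm : ∀ i ≠ m, x i < x m) (hl : ∀ i ≠ l, x l < x i)
    (hm0 : 0 < x m) (hl0 : x l < 0) (ham : a ≠ m) (hal : a ≠ l) (ha0 : x a ≠ 0)
    {S T : Finset (Fin d)} (hS : S = ∅ ∨ S = {m} ∨ S = {l})
    (hT : IsTopK 1 (clipNorm (gradStep (of fun _ : Fin 1 => x) (fun _ => x a)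
      (indicatorVec S))) T) :
    T = {m} ∨ T = {l} := by
  have hlm : l ≠ m := fun h => (hl0.trans hm0).ne (congrArg x h)
  obtain ⟨c, hc⟩ : ∃ c, c = x a - x ⬝ᵥ indicatorVec S := ⟨_, rfl⟩
  have hv : ∀ i ∉ S, gradStep (of fun _ : Fin 1 => x) (fun _ => x a) (indicatorVec S) i
      = c * x i := fun i hi => by
    simp [gradStep_single_row, indicatorVec, hi, hc]
  have hcS : S = ∅ ∧ c = x a ∨ S = {m} ∧ c = x a - x m ∨ S = {l} ∧ c = x a - x l := by
    rcases hS with rfl | rfl | rfl <;> simp [hc, dotProduct, indicatorVec]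
  -- The next iterate is the coordinate off `S` where `c • x` is largest: the argmax or argmin.
  obtain ⟨j, hjA, hjS, hj0, hjmax⟩ : ∃ j ∈ ({m, l} : Finset (Fin d)), j ∉ S ∧ 0 < c * x j ∧
      ∀ i ≠ j, c * x i < c * x j := by
    rcases lt_trichotomy c 0 with hneg | rfl | hpos
    · refine ⟨l, by simp, ?_, mul_pos_of_neg_of_neg hneg hl0,
        fun i hi => mul_lt_mul_of_neg_left (hl i hi) hneg⟩
      rcases hcS with ⟨rfl, -⟩ | ⟨rfl, -⟩ | ⟨rfl, rfl⟩
      · simp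
      · simpa using hlm
      · linarith [hl a hal]
    · rcases hcS with ⟨-, h⟩ | ⟨-, h⟩ | ⟨-, h⟩
      · exact (ha0 h.symm).elim
      · linarith [hm a ham]
      · linarith [hl a hal]
    · refine ⟨m, by simp, ?_, mul_pos hpos hm0, fun i hi => mul_lt_mul_of_pos_left (hm i hi) hpos⟩
      rcases hcS with ⟨rfl, -⟩ | ⟨rfl, rfl⟩ | ⟨rfl, -⟩
      · simp
      · linarith [hm a ham]
      · simpa using hlm.symm
  have hSA : S ⊆ {m, l} := by rcases hS with rfl | rfl | rfl <;> simp
  obtain ⟨i, hi, rfl⟩ := hT.exists_mem_eq_singleton hjA (by rwa [hv j hjS]) fun i hiA => by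
    rw [hv i fun hiS => hiA (hSA hiS), hv j hjS]
    exact hjmax i fun h => hiA (h ▸ hjA)
  simpa using hi

lemma greedyIter_succ_eq_argmax_or_argmin (hm : ∀ i ≠ m, x i < x m) (hl : ∀ i ≠ l, x l < x i)
    (hm0 : 0 < x m) (hl0 : x l < 0) (ham : a ≠ m) (hal : a ≠ l) (ha0 : x a ≠ 0)
    {sel : (Fin d → ℝ) → Finset (Fin d)} (hsel : ∀ q, IsTopK 1 q (sel q)) (t : ℕ) :
    greedyIter (of fun _ : Fin 1 => x) (fun _ => x a) 1 sel (t + 1) = {m} ∨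
      greedyIter (of fun _ : Fin 1 => x) (fun _ => x a) 1 sel (t + 1) = {l} := by
  induction t with
  | zero => exact isTopK_gradStep_eq_argmax_or_argmin hm hl hm0 hl0 ham hal ha0 (.inl rfl) (hsel _)
  | succ t ih =>
    exact isTopK_gradStep_eq_argmax_or_argmin hm hl hm0 hl0 ham hal ha0 (.inr ih) (hsel _)

end Greedy

lemma setOf_greedyIter_eq_singleton_subset {d : ℕ} {sel : (Fin d → ℝ) → Finset (Fin d)}
    (hsel : ∀ q, IsTopK 1 q (sel q)) {t : ℕ} (ht : 1 ≤ t) (a : Fin d) :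
    {x : Fin d → ℝ | greedyIter (of fun _ : Fin 1 => x) (fun _ => x a) 1 sel t = {a}} ⊆
      {x | ¬ Function.Injective x} ∪ {x | x a = 0} ∪ {x | ∀ i, x i ≤ 0} ∪ {x | ∀ i, 0 ≤ x i} ∪
        {x | ∀ j ≠ a, x j < x a} ∪ {x | ∀ j ≠ a, x a < x j} := by
  intro x hx
  by_contra h
  simp only [Set.mem_union, Set.mem_ofPred_eq, not_or, not_not, not_forall, not_le] at h
  obtain ⟨⟨⟨⟨⟨hx_inj, ha0⟩, ⟨i, hi⟩⟩, ⟨k, hk⟩⟩, hmax⟩, hmin⟩ := h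
  obtain ⟨m, -, hm⟩ := exists_max_image univ x ⟨a, mem_univ a⟩
  obtain ⟨l, -, hl⟩ := exists_min_image univ x ⟨a, mem_univ a⟩
  have hm' : ∀ i ≠ m, x i < x m := fun i hi => (hm i (mem_univ i)).lt_of_ne (hx_inj.ne hi)
  have hl' : ∀ i ≠ l, x l < x i := fun i hi => (hl i (mem_univ i)).lt_of_ne (hx_inj.ne hi.symm)
  have ham : a ≠ m := by obtain ⟨j, hj, hja⟩ := hmax; rintro rfl; exact hja (hm' j hj)
  have hal : a ≠ l := by obtain ⟨j, hj, hja⟩ := hmin; rintro rfl; exact hja (hl' j hj)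
  obtain ⟨s, rfl⟩ := Nat.exists_eq_add_of_le' ht
  rcases greedyIter_succ_eq_argmax_or_argmin hm' hl' (hi.trans_le (hm i (mem_univ i)))
    ((hl k (mem_univ k)).trans_lt hk) ham hal ha0 hsel s with h | h
  · exact ham (singleton_injective (hx.symm.trans h))
  · exact hal (singleton_injective (hx.symm.trans h))

lemma inv_two_pow_add_inv_natCast_eq_ofReal {d : ℕ} (hd : d ≠ 0) :
    (2⁻¹ : ℝ≥0∞) ^ d + 2⁻¹ ^ d + (d : ℝ≥0∞)⁻¹ + (d : ℝ≥0∞)⁻¹ =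
      ENNReal.ofReal (1 / 2 ^ (d - 1) + 2 / d) := by
  rw [← ENNReal.ofReal_toReal (a := _ + _) (by simp [hd]), ENNReal.toReal_add (by simp [hd])
    (by simp [hd]), ENNReal.toReal_add (by simp [hd]) (by simp [hd]), ENNReal.toReal_add (by simp)
    (by simp)]
  have h2 : (2⁻¹ : ℝ) ^ d = 2⁻¹ * 2⁻¹ ^ (d - 1) := by
    rw [← pow_succ', Nat.sub_add_cancel (Nat.one_le_iff_ne_zero.2 hd)]
  simp only [ENNReal.toReal_inv, ENNReal.toReal_pow, ENNReal.toReal_ofNat, ENNReal.toReal_natCast,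
    h2, one_div, inv_pow]
  congr 1
  ring

theorem stmt10 (d : ℕ) (hd : 1 < d) (Sstar : Finset (Fin d)) (hS : Sstar.card = 1)
    (sel : (Fin d → ℝ) → Finset (Fin d)) (hsel : ∀ q, IsTopK 1 q (sel q))
    (t : ℕ) (ht : 1 ≤ t) :
    (Measure.pi fun _ : Fin d => gaussianReal 0 1)
      {x : Fin d → ℝ |
        greedyIter (Matrix.of fun _ : Fin 1 => x)
          (fun _ : Fin 1 => x ⬝ᵥ indicatorVec Sstar) 1 sel t = Sstar} ≤
      ENNReal.ofReal (1 / 2 ^ (d - 1) + 2 / (d : ℝ)) := by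
  obtain ⟨a, rfl⟩ := card_eq_one.mp hS
  have hsymm : (gaussianReal 0 1).map (fun x => -x) = gaussianReal 0 1 := by
    rw [gaussianReal_map_neg, neg_zero]
  have : NullSingletonClass (gaussianReal 0 1) := nullSingletonClass_gaussianReal one_ne_zero
  set P := Measure.pi fun _ : Fin d => gaussianReal 0 1
  simp only [dotProduct_indicatorVec_singleton]
  calc P {x | greedyIter (of fun _ : Fin 1 => x) (fun _ => x a) 1 sel t = {a}}
      ≤ P ({x | ¬ Function.Injective x} ∪ {x | x a = 0} ∪ {x | ∀ i, x i ≤ 0} ∪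
          {x | ∀ i, 0 ≤ x i} ∪ {x | ∀ j ≠ a, x j < x a} ∪ {x | ∀ j ≠ a, x a < x j}) :=
        measure_mono (setOf_greedyIter_eq_singleton_subset hsel ht a)
    _ ≤ P {x | ¬ Function.Injective x} + P {x | x a = 0} + P {x | ∀ i, x i ≤ 0} +
          P {x | ∀ i, 0 ≤ x i} + P {x | ∀ j ≠ a, x j < x a} + P {x | ∀ j ≠ a, x a < x j} := by
        grw [measure_union_le, measure_union_le, measure_union_le, measure_union_le,
          measure_union_le]
    _ ≤ 2⁻¹ ^ d + 2⁻¹ ^ d + (d : ℝ≥0∞)⁻¹ + (d : ℝ≥0∞)⁻¹ := by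
        have hmax := pi_setOf_forall_rel_le_inv_card (gaussianReal 0 1) (R := (· < ·))
          (measurableSet_lt measurable_fst measurable_snd) (fun _ _ => lt_asymm) a
        have hmin := pi_setOf_forall_rel_le_inv_card (gaussianReal 0 1) (R := fun s t => t < s)
          (measurableSet_lt measurable_snd measurable_fst) (fun _ _ => lt_asymm) a
        rw [Fintype.card_fin] at hmax hmin
        rw [pi_setOf_not_injective_null, Measure.pi_hyperplane, pi_setOf_forall_nonpos hsymm,
          pi_setOf_forall_nonneg hsymm, Fintype.card_fin, zero_add, zero_add]
        gcongr
    _ = ENNReal.ofReal (1 / 2 ^ (d - 1) + 2 / (d : ℝ)) :=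
        inv_two_pow_add_inv_natCast_eq_ofReal (by omega)
end

section
/- For the binary sparse in-context regression task with n = k = 1, σ_ε = 0, and single in-context example (x, xᵀw*) with x ~ N(0, I_d), there exists ζ > 0 (depending on the realized data) such that, with probability at least 1 − 1/2^{d-1} over x, for every reasoning length t ≥ 2·log 2 / (−log(1 − ζ)) and all sufficiently large sampling numbers N, the majority-vote prediction satisfies w_{t,N}^{mv} = w*; in particular P( w_{t,N}^{mv} = w* ) ≥ 1 − 1/2^{d-1}. -/
/-!
With one example and `k = 1` the decoding state is `0` or a basis vector `e_j`, and
`w̃ = w + (x_{i⋆} - ⟨x, w⟩) x`. Unless all coordinates of `x` have the same sign (probability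
`2^{1-d}`) or `x` lies in a null set of ties, every such state reaches the absorbing state
`e_{i⋆}` within two steps with probability at least some `ζ > 0`. So the probability of not
being at `e_{i⋆}` contracts by `1 - ζ` every two steps and is below `1/4` after the stated
number of steps, and a Chernoff bound shows that the plurality vote over `N` samples returns
`e_{i⋆}` with probability tending to `1`.
-/

open Matrix Finset

open MeasureTheory ProbabilityTheory

open scoped Topology

section AbsorbingChain

variable {α : Type*} [Fintype α] {T : Matrix α α ℝ} {p : α → ℝ}

theorem sum_vecMul_eq_sum (hT : ∀ a, p a ≠ 0 → ∑ b, T a b = 1) :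
    ∑ b, vecMul p T b = ∑ a, p a := by
  simp only [vecMul, dotProduct]
  rw [Finset.sum_comm]
  refine Finset.sum_congr rfl fun a _ => ?_
  rw [← Finset.mul_sum]
  by_cases ha : p a = 0
  · rw [ha, zero_mul]
  · rw [hT a ha, mul_one]

theorem one_sub_vecMul_le [DecidableEq α] {a : α} {ζ : ℝ} (hp : 0 ≤ p)
    (hmass : ∑ b, p b = 1) (ha : 1 ≤ T a a) (hT : ∀ b, p b ≠ 0 → ζ ≤ T b a) :
    1 - vecMul p T a ≤ (1 - ζ) * (1 - p a) := by
  have hterm : ∀ b, p b * (ζ + (1 - ζ) * if b = a then 1 else 0) ≤ p b * T b a := by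
    intro b
    by_cases hb : p b = 0
    · rw [hb, zero_mul, zero_mul]
    refine mul_le_mul_of_nonneg_left ?_ (hp b)
    split_ifs with hba
    · subst hba
      linarith
    · simpa using hT b hb
  have hsum : ∑ b, p b * (ζ + (1 - ζ) * if b = a then 1 else 0) = ζ + (1 - ζ) * p a := by
    simp only [mul_add, mul_ite, mul_one, mul_zero, Finset.sum_add_distrib, ← Finset.sum_mul,
      hmass, Finset.sum_ite_eq', Finset.mem_univ, if_true]
    ring
  have hle := Finset.sum_le_sum fun b (_ : b ∈ Finset.univ) => hterm b
  rw [hsum] at hle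
  simp only [vecMul, dotProduct]
  nlinarith

end AbsorbingChain

theorem le_pow_half_of_two_step_le {u : ℕ → ℝ} {r : ℝ} (hr : 0 ≤ r)
    (hu : ∀ t, u t ≤ 1) (hstep : ∀ t, u (t + 2) ≤ r * u t) : ∀ t, u t ≤ r ^ (t / 2)
  | 0 => by simpa using hu 0
  | 1 => by simpa using hu 1
  | t + 2 => by
    rw [Nat.add_div_right t two_pos, pow_succ']
    exact (hstep t).trans
      (mul_le_mul_of_nonneg_left (le_pow_half_of_two_step_le hr hu hstep t) hr)

theorem pow_le_quarter_of_log_le {s : ℝ} (hs0 : 0 < s) (hs1 : s < 1) {t : ℕ}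
    (ht : 2 * Real.log 2 / (-Real.log s) ≤ t) : s ^ t ≤ 1 / 4 := by
  have hlog : 0 < -Real.log s := neg_pos.mpr (Real.log_neg hs0 hs1)
  rw [div_le_iff₀ hlog] at ht
  refine (Real.log_le_log_iff (pow_pos hs0 t) (by norm_num)).1 ?_
  rw [Real.log_pow, show (1 / 4 : ℝ) = (2 ^ 2)⁻¹ by norm_num, Real.log_inv, Real.log_pow]
  push_cast
  linarith

/-- Bernoulli gives `1 - ζ ≤ (1 - ζ / 4) ^ 4`, and `4 * (t / 2) ≥ t` once `t ≥ 2`. -/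
theorem pow_half_le_quarter {ζ : ℝ} (hζ0 : 0 ≤ ζ) (hζ1 : ζ ≤ 1) {t : ℕ}
    (ht : (1 - ζ / 4) ^ t ≤ 1 / 4) : (1 - ζ) ^ (t / 2) ≤ 1 / 4 := by
  have hs0 : 0 ≤ 1 - ζ / 4 := by linarith
  have hs1 : 1 - ζ / 4 ≤ 1 := by linarith
  have ht2 : t ≤ 4 * (t / 2) := by
    by_contra! h
    have ht1 : t ≤ 1 := by omega
    have hs : 1 - ζ / 4 ≤ (1 - ζ / 4) ^ t := by
      interval_cases t <;> simp [hs1]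
    linarith
  have hbern : 1 - ζ ≤ (1 - ζ / 4) ^ 4 := by
    have := one_add_mul_le_pow (a := -(ζ / 4)) (by linarith) 4
    norm_num at this
    linarith
  calc (1 - ζ) ^ (t / 2) ≤ ((1 - ζ / 4) ^ 4) ^ (t / 2) :=
        pow_le_pow_left₀ (by linarith) hbern _
    _ = (1 - ζ / 4) ^ (4 * (t / 2)) := by rw [pow_mul]
    _ ≤ (1 - ζ / 4) ^ t := pow_le_pow_of_le_one hs0 hs1 ht2
    _ ≤ 1 / 4 := ht

theorem Finset.exists_pos_le_of_forall_pos {β : Type*} (s : Finset β) (f : β → ℝ)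
    (hf : ∀ b ∈ s, 0 < f b) : ∃ ε, 0 < ε ∧ ε ≤ 1 ∧ ∀ b ∈ s, ε ≤ f b := by
  rcases s.eq_empty_or_nonempty with rfl | hs
  · exact ⟨1, one_pos, le_rfl, by simp⟩
  · obtain ⟨b₀, hb₀, hmin⟩ := s.exists_min_image f hs
    exact ⟨min (f b₀) 1, lt_min (hf b₀ hb₀) one_pos, min_le_right _ _,
      fun b hb => (min_le_left _ _).trans (hmin b hb)⟩

section MajorityVote

open Filter

variable {d N : ℕ}

theorem eq_of_lt_two_mul_countVotes (g : Fin N → Finset (Fin d)) {S V : Finset (Fin d)}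
    (hV : ∀ S', countVotes g S' ≤ countVotes g V) (hS : N < 2 * countVotes g S) : V = S := by
  by_contra hVS
  have hdisj : Disjoint (univ.filter fun j => g j = S) (univ.filter fun j => g j = V) :=
    Finset.disjoint_filter.2 fun j _ hjS hjV => hVS (hjV.symm.trans hjS)
  have hcard := Finset.card_le_univ ((univ.filter fun j => g j = S) ∪
    (univ.filter fun j => g j = V))
  rw [Finset.card_union_of_disjoint hdisj, Fintype.card_fin] at hcard
  have := hV S
  unfold countVotes at this hS
  omega

theorem two_pow_le_prod_of_two_mul_countVotes_le (g : Fin N → Finset (Fin d))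
    {S : Finset (Fin d)} (hS : 2 * countVotes g S ≤ N) :
    (2 : ℝ) ^ N ≤ ∏ j, if g j = S then 1 else 4 := by
  rw [Finset.prod_ite, Finset.prod_const_one, one_mul, Finset.prod_const]
  have hsplit := Finset.card_filter_add_card_filter_not (s := (univ : Finset (Fin N)))
    (fun j => g j = S)
  rw [Finset.card_univ, Fintype.card_fin] at hsplit
  unfold countVotes at hS
  calc (2 : ℝ) ^ N ≤ 2 ^ (2 * (univ.filter fun j => ¬g j = S).card) :=
        pow_le_pow_right₀ one_le_two (by omega)
    _ = 4 ^ (univ.filter fun j => ¬g j = S).card := by rw [pow_mul]; norm_num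

/-- Chernoff bound, with weight `4` on every vote that is not for `Sstar`. -/
theorem one_sub_pow_le_mvRecoverProb (f : Finset (Fin d) → ℝ) (hf0 : ∀ S, 0 ≤ f S)
    (hf1 : ∑ S, f S = 1) (Sstar : Finset (Fin d))
    (vote : (Fin N → Finset (Fin d)) → Finset (Fin d))
    (hvote : ∀ g S, countVotes g S ≤ countVotes g (vote g)) :
    1 - ((4 - 3 * f Sstar) / 2) ^ N ≤ mvRecoverProb f N vote Sstar := by
  classical
  set w : Finset (Fin d) → ℝ := fun S => if S = Sstar then 1 else 4
  have hterm : ∀ g : Fin N → Finset (Fin d), ∏ j, f (g j) ≤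
      (∏ j, f (g j)) * (if vote g = Sstar then 1 else 0) +
        (∏ j, f (g j) * w (g j)) / 2 ^ N := by
    intro g
    have hprod : 0 ≤ ∏ j, f (g j) := Finset.prod_nonneg fun j _ => hf0 _
    rw [Finset.prod_mul_distrib, mul_div_assoc]
    by_cases hS : N < 2 * countVotes g Sstar
    · rw [if_pos (eq_of_lt_two_mul_countVotes g (hvote g) hS)]
      have : 0 ≤ (∏ j, w (g j)) / 2 ^ N := by positivity
      nlinarith
    · have hw : 1 ≤ (∏ j, w (g j)) / 2 ^ N := by
        rw [one_le_div (by positivity)]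
        exact two_pow_le_prod_of_two_mul_countVotes_le g (by omega)
      have : 0 ≤ (∏ j, f (g j)) * (if vote g = Sstar then 1 else 0) := by positivity
      nlinarith
  have hfw : ∑ S, f S * w S = 4 - 3 * f Sstar := by
    have hsplit : ∀ S, f S * w S = 4 * f S - 3 * if S = Sstar then f S else 0 := by
      intro S
      simp only [w]
      split_ifs <;> ring
    simp only [hsplit, Finset.sum_sub_distrib, ← Finset.mul_sum, hf1, Finset.sum_ite_eq',
      Finset.mem_univ, if_true]
    ring
  have hsum := Finset.sum_le_sum fun g (_ : g ∈ univ) => hterm g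
  rw [← Fintype.sum_pow, hf1, one_pow, Finset.sum_add_distrib, ← Finset.sum_div,
    ← Fintype.sum_pow (fun S => f S * w S), hfw, ← div_pow] at hsum
  unfold mvRecoverProb
  linarith

theorem mvRecoverProb_le_one (f : Finset (Fin d) → ℝ) (hf0 : ∀ S, 0 ≤ f S)
    (hf1 : ∑ S, f S = 1) (Sstar : Finset (Fin d))
    (vote : (Fin N → Finset (Fin d)) → Finset (Fin d)) :
    mvRecoverProb f N vote Sstar ≤ 1 := by
  calc mvRecoverProb f N vote Sstar ≤ ∑ g : Fin N → Finset (Fin d), ∏ j, f (g j) := by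
        refine Finset.sum_le_sum fun g _ => ?_
        have hprod : 0 ≤ ∏ j, f (g j) := Finset.prod_nonneg fun j _ => hf0 _
        split_ifs <;> simp [hprod]
    _ = 1 := by rw [← Fintype.sum_pow, hf1, one_pow]

theorem tendsto_mvRecoverProb (f : Finset (Fin d) → ℝ) (hf0 : ∀ S, 0 ≤ f S)
    (hf1 : ∑ S, f S = 1) {Sstar : Finset (Fin d)} (hfS : 2 / 3 < f Sstar)
    (vote : (N : ℕ) → (Fin N → Finset (Fin d)) → Finset (Fin d))
    (hvote : ∀ N g S, countVotes g S ≤ countVotes g (vote N g)) :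
    Tendsto (fun N => mvRecoverProb f N (vote N) Sstar) atTop (𝓝 1) := by
  have hfS1 : f Sstar ≤ 1 := hf1 ▸ Finset.single_le_sum (fun S _ => hf0 S) (Finset.mem_univ _)
  have hpow : Tendsto (fun N => ((4 - 3 * f Sstar) / 2) ^ N) atTop (𝓝 0) :=
    tendsto_pow_atTop_nhds_zero_of_lt_one (by linarith) (by linarith)
  refine tendsto_of_tendsto_of_tendsto_of_le_of_le (by simpa using hpow.const_sub 1)
    tendsto_const_nhds (fun N => ?_) fun N => mvRecoverProb_le_one f hf0 hf1 Sstar (vote N)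
  exact one_sub_pow_le_mvRecoverProb f hf0 hf1 Sstar (vote N) (hvote N)

end MajorityVote

section Decoding

variable {d : ℕ}

theorem dotProduct_indicatorVec (x : Fin d → ℝ) (S : Finset (Fin d)) :
    x ⬝ᵥ indicatorVec S = ∑ i ∈ S, x i := by
  simp [dotProduct, indicatorVec, Finset.sum_ite_mem]

theorem gradStep_of_single (x v w : Fin d → ℝ) :
    gradStep (Matrix.of fun _ : Fin 1 => x) (fun _ => x ⬝ᵥ v) w =
      w + (x ⬝ᵥ (v - w)) • x := by
  funext i
  simp only [gradStep, mulVec, dotProduct, transpose_apply, of_apply, Nat.cast_one, div_one,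
    one_smul, Pi.sub_apply, Pi.add_apply, Pi.smul_apply, smul_eq_mul, ← Finset.mul_sum,
    Finset.sum_sub_distrib, mul_sub, Finset.univ_unique, Finset.sum_singleton]
  ring

theorem clipNorm_nonneg (v : Fin d → ℝ) (i : Fin d) : 0 ≤ clipNorm v i :=
  div_nonneg (le_max_right _ _) (Finset.sum_nonneg fun _ _ => le_max_right _ _)

theorem sum_max_zero_pos {v : Fin d → ℝ} {i : Fin d} (hi : 0 < v i) :
    0 < ∑ i', max (v i') 0 :=
  Finset.sum_pos' (fun _ _ => le_max_right _ _) ⟨i, Finset.mem_univ _, lt_max_of_lt_left hi⟩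

theorem clipNorm_pos {v : Fin d → ℝ} {i : Fin d} (hi : 0 < v i) : 0 < clipNorm v i :=
  div_pos (lt_max_of_lt_left hi) (sum_max_zero_pos hi)

theorem sum_clipNorm {v : Fin d → ℝ} {i : Fin d} (hi : 0 < v i) :
    ∑ i', clipNorm v i' = 1 := by
  simp only [clipNorm]
  rw [← Finset.sum_div, div_self (sum_max_zero_pos hi).ne']

theorem clipNorm_indicatorVec_singleton (i : Fin d) : clipNorm (indicatorVec {i}) i = 1 := by
  simp [clipNorm, indicatorVec, apply_ite (fun a : ℝ => max a 0)]

theorem sampleWoR_one (q : Fin d → ℝ) (S : Finset (Fin d)) :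
    sampleWoR 1 q S = ∑ i, if {i} = S then q i else 0 := by
  classical
  rw [sampleWoR, ← (Equiv.funUnique (Fin 1) (Fin d)).symm.sum_comp]
  refine Finset.sum_congr rfl fun i _ => ?_
  have himg : Finset.image ((Equiv.funUnique (Fin 1) (Fin d)).symm i) univ = {i} := by
    simp [Equiv.funUnique]
  simp only [Function.injective_of_subsingleton, himg, true_and, Fin.prod_univ_one]
  split_ifs <;> simp [Equiv.funUnique]

theorem sampleWoR_one_singleton (q : Fin d → ℝ) (i : Fin d) : sampleWoR 1 q {i} = q i := by
  rw [sampleWoR_one, Finset.sum_eq_single i] <;> simp +contextual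

theorem sampleWoR_one_of_card_ne_one (q : Fin d → ℝ) {S : Finset (Fin d)} (hS : S.card ≠ 1) :
    sampleWoR 1 q S = 0 := by
  rw [sampleWoR_one]
  refine Finset.sum_eq_zero fun i _ => if_neg ?_
  rintro rfl
  exact hS (Finset.card_singleton i)

theorem sampleWoR_one_nonneg {q : Fin d → ℝ} (hq : 0 ≤ q) (S : Finset (Fin d)) :
    0 ≤ sampleWoR 1 q S := by
  rw [sampleWoR_one]
  exact Finset.sum_nonneg fun i _ => by split_ifs; exacts [hq i, le_rfl]

theorem sum_sampleWoR_one (q : Fin d → ℝ) : ∑ S, sampleWoR 1 q S = ∑ i, q i := by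
  simp only [sampleWoR_one]
  rw [Finset.sum_comm]
  simp

end Decoding

namespace SingleExample

variable {d : ℕ}

def goodDesigns (istar : Fin d) : Set (Fin d → ℝ) :=
  {x | (∃ j, x j * x istar < 0) ∧ ∀ j ≠ istar, x j ≠ x istar}

variable (x : Fin d → ℝ) (istar : Fin d)

/-- The paper's `w̃_t` when `w_{t-1} = indicatorVec S`. -/
noncomputable def stepVec (S : Finset (Fin d)) : Fin d → ℝ :=
  gradStep (Matrix.of fun _ : Fin 1 => x) (fun _ => x ⬝ᵥ indicatorVec {istar}) (indicatorVec S)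

noncomputable def kernel : Matrix (Finset (Fin d)) (Finset (Fin d)) ℝ :=
  Matrix.of (transProb (Matrix.of fun _ : Fin 1 => x) (fun _ => x ⬝ᵥ indicatorVec {istar}) 1)

noncomputable def chain (t : ℕ) : Finset (Fin d) → ℝ :=
  chainProb (Matrix.of fun _ : Fin 1 => x) (fun _ => x ⬝ᵥ indicatorVec {istar}) 1 t

theorem stepVec_apply (S : Finset (Fin d)) (i : Fin d) :
    stepVec x istar S i = indicatorVec S i + (x istar - ∑ j ∈ S, x j) * x i := by
  rw [stepVec, gradStep_of_single]
  simp [dotProduct_sub, dotProduct_indicatorVec]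

theorem stepVec_empty_apply (i : Fin d) : stepVec x istar ∅ i = x istar * x i := by
  simp [stepVec_apply, indicatorVec]

theorem stepVec_singleton_apply (j i : Fin d) :
    stepVec x istar {j} i = (if i = j then 1 else 0) + (x istar - x j) * x i := by
  simp [stepVec_apply, indicatorVec]

theorem kernel_apply (S S' : Finset (Fin d)) :
    kernel x istar S S' = sampleWoR 1 (clipNorm (stepVec x istar S)) S' := rfl

theorem kernel_nonneg (S S' : Finset (Fin d)) : 0 ≤ kernel x istar S S' :=
  sampleWoR_one_nonneg (clipNorm_nonneg _) S'

theorem kernel_singleton (S : Finset (Fin d)) (i : Fin d) :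
    kernel x istar S {i} = clipNorm (stepVec x istar S) i :=
  sampleWoR_one_singleton _ i

theorem kernel_target_target : kernel x istar {istar} {istar} = 1 := by
  have : stepVec x istar {istar} = indicatorVec {istar} := by
    funext i
    simp [stepVec_apply]
  rw [kernel_singleton, this, clipNorm_indicatorVec_singleton]

theorem sum_kernel {S : Finset (Fin d)} {i : Fin d} (hi : 0 < stepVec x istar S i) :
    ∑ S', kernel x istar S S' = 1 := by
  simp only [kernel_apply, sum_sampleWoR_one, sum_clipNorm hi]

theorem one_le_kernel_sq_target : 1 ≤ (kernel x istar * kernel x istar) {istar} {istar} := by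
  rw [Matrix.mul_apply]
  calc (1 : ℝ) = kernel x istar {istar} {istar} * kernel x istar {istar} {istar} := by
        rw [kernel_target_target, mul_one]
    _ ≤ _ := Finset.single_le_sum
        (f := fun S => kernel x istar {istar} S * kernel x istar S {istar})
        (fun S _ => mul_nonneg (kernel_nonneg x istar _ _) (kernel_nonneg x istar _ _))
        (Finset.mem_univ _)

theorem kernel_sq_target_pos {S : Finset (Fin d)} {j : Fin d} (hSj : 0 < stepVec x istar S j)
    (hj : 0 < stepVec x istar {j} istar) : 0 < (kernel x istar * kernel x istar) S {istar} := by
  rw [Matrix.mul_apply]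
  refine lt_of_lt_of_le ?_ (Finset.single_le_sum
    (f := fun S' => kernel x istar S S' * kernel x istar S' {istar})
    (fun S' _ => mul_nonneg (kernel_nonneg x istar _ _) (kernel_nonneg x istar _ _))
    (Finset.mem_univ {j}))
  rw [kernel_singleton, kernel_singleton]
  exact mul_pos (clipNorm_pos hSj) (clipNorm_pos hj)

theorem chain_zero : chain x istar 0 = fun S => if S = ∅ then 1 else 0 := rfl

theorem chain_succ (t : ℕ) : chain x istar (t + 1) = vecMul (chain x istar t) (kernel x istar) :=
  rfl

theorem chain_nonneg (t : ℕ) (S : Finset (Fin d)) : 0 ≤ chain x istar t S := by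
  induction t generalizing S with
  | zero => rw [chain_zero]; positivity
  | succ t ih =>
    simp only [chain_succ, vecMul, dotProduct]
    exact Finset.sum_nonneg fun S' _ => mul_nonneg (ih S') (kernel_nonneg x istar S' S)

theorem card_le_one_of_chain_ne_zero {t : ℕ} {S : Finset (Fin d)} (h : chain x istar t S ≠ 0) :
    S.card ≤ 1 := by
  cases t with
  | zero =>
    rw [chain_zero] at h
    dsimp only at h
    split_ifs at h with hS
    · simp [hS]
    · exact absurd rfl h
  | succ t =>
    by_contra hS
    simp only [chain_succ, vecMul, dotProduct] at h
    refine h (Finset.sum_eq_zero fun S' _ => ?_)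
    rw [kernel_apply, sampleWoR_one_of_card_ne_one _ (by omega), mul_zero]

variable {x istar}

/-- When the current index `j` overshoots (`(x i⋆ - x j) x i⋆ < 0`), the path detours through
an index `j₀` of sign opposite to `x i⋆`. -/
theorem exists_two_step_path (hx : x ∈ goodDesigns istar) {S : Finset (Fin d)}
    (hS : S.card ≤ 1) : ∃ j, 0 < stepVec x istar S j ∧ 0 < stepVec x istar {j} istar := by
  obtain ⟨⟨j₀, hj₀⟩, hne⟩ := hx
  have hstar : 0 < x istar * x istar := by
    refine mul_self_pos.2 fun h => ?_
    rw [h, mul_zero] at hj₀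
    exact lt_irrefl 0 hj₀
  have hreach : ∀ j, j = istar ∨ 0 < (x istar - x j) * x istar →
      0 < stepVec x istar {j} istar := by
    rintro j (rfl | hj)
    · simp [stepVec_singleton_apply]
    · rw [stepVec_singleton_apply]
      split_ifs <;> linarith
  have htarget : 0 < stepVec x istar {istar} istar := hreach istar (Or.inl rfl)
  rcases Nat.le_one_iff_eq_zero_or_eq_one.1 hS with hS | hS
  · rw [Finset.card_eq_zero.1 hS]
    exact ⟨istar, by rwa [stepVec_empty_apply], htarget⟩
  obtain ⟨j, rfl⟩ := Finset.card_eq_one.1 hS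
  by_cases hj : j = istar
  · subst hj
    exact ⟨j, htarget, htarget⟩
  have hgap : (x istar - x j) * x istar ≠ 0 :=
    mul_ne_zero (sub_ne_zero.2 (hne j hj).symm) (fun h => by simp [h] at hstar)
  rcases hgap.lt_or_gt with hover | hunder
  · have hj₀j : j₀ ≠ j := by
      rintro rfl
      nlinarith
    refine ⟨j₀, ?_, hreach j₀ (Or.inr (by nlinarith))⟩
    rw [stepVec_singleton_apply, if_neg hj₀j, zero_add]
    nlinarith
  · refine ⟨istar, ?_, htarget⟩
    rw [stepVec_singleton_apply, if_neg (Ne.symm hj), zero_add]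
    exact hunder

theorem sum_chain (hx : x ∈ goodDesigns istar) (t : ℕ) : ∑ S, chain x istar t S = 1 := by
  induction t with
  | zero => simp [chain_zero]
  | succ t ih =>
    rw [chain_succ, sum_vecMul_eq_sum fun S hS => ?_, ih]
    obtain ⟨j, hj, -⟩ := exists_two_step_path hx (card_le_one_of_chain_ne_zero x istar hS)
    exact sum_kernel x istar hj

theorem exists_one_sub_chain_le (hx : x ∈ goodDesigns istar) :
    ∃ ζ, 0 < ζ ∧ ζ ≤ 1 ∧ ∀ t, 1 - chain x istar t {istar} ≤ (1 - ζ) ^ (t / 2) := by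
  obtain ⟨ζ, hζ0, hζ1, hζ⟩ :=
    (univ.filter fun S : Finset (Fin d) => S.card ≤ 1).exists_pos_le_of_forall_pos
    (fun S => (kernel x istar * kernel x istar) S {istar}) fun S hS => by
      obtain ⟨j, hSj, hj⟩ := exists_two_step_path hx (Finset.mem_filter.1 hS).2
      exact kernel_sq_target_pos x istar hSj hj
  refine ⟨ζ, hζ0, hζ1, le_pow_half_of_two_step_le (by linarith)
    (fun t => by linarith [chain_nonneg x istar t {istar}]) fun t => ?_⟩
  rw [chain_succ, chain_succ, vecMul_vecMul]
  exact one_sub_vecMul_le (chain_nonneg x istar t ·) (sum_chain hx t)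
    (one_le_kernel_sq_target x istar) fun S hS =>
      hζ S (Finset.mem_filter.2 ⟨Finset.mem_univ _, card_le_one_of_chain_ne_zero x istar hS⟩)

theorem exists_chain_target_ge (hx : x ∈ goodDesigns istar) :
    ∃ ζ : ℝ, 0 < ζ ∧ ζ < 1 ∧ ∀ t : ℕ, 2 * Real.log 2 / (-Real.log (1 - ζ)) ≤ t →
      3 / 4 ≤ chain x istar t {istar} := by
  obtain ⟨ζ, hζ0, hζ1, hζ⟩ := exists_one_sub_chain_le hx
  refine ⟨ζ / 4, by linarith, by linarith, fun t ht => ?_⟩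
  have := pow_half_le_quarter hζ0.le hζ1 (pow_le_quarter_of_log_le (by linarith) (by linarith) ht)
  linarith [hζ t]

end SingleExample

section GaussianDesign

open Set

theorem measure_pi_eval_eq_eval {ι β : Type*} [Fintype ι] [MeasurableSpace β] [MeasurableEq β]
    (μ : ι → Measure β) [∀ i, IsProbabilityMeasure (μ i)] [∀ i, NullSingletonClass (μ i)]
    {i j : ι} (hij : i ≠ j) : Measure.pi μ {x | x i = x j} = 0 := by
  have hindep : IndepFun (Function.eval i) (Function.eval j) (Measure.pi μ) :=
    (iIndepFun_pi (X := fun _ => id) fun _ => aemeasurable_id).indepFun hij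
  have hlaw : (Measure.pi μ).map (fun x => (x i, x j)) = (μ i).prod (μ j) := by
    rw [(indepFun_iff_map_prod_eq_prod_map_map (measurable_pi_apply i).aemeasurable
      (measurable_pi_apply j).aemeasurable).1 hindep, (measurePreserving_eval μ i).map_eq,
      (measurePreserving_eval μ j).map_eq]
  change Measure.pi μ ((fun x => (x i, x j)) ⁻¹' diagonal β) = 0
  rw [← Measure.map_apply (by fun_prop) measurableSet_diagonal, hlaw,
    Measure.measure_prod_null measurableSet_diagonal]
  refine Filter.Eventually.of_forall fun a => ?_
  have : Prod.mk a ⁻¹' diagonal β = {a} := by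
    ext b
    simp [eq_comm]
  simp [this]

variable {v : NNReal}

theorem gaussianReal_Iic_zero_eq_Ici : gaussianReal 0 v (Iic 0) = gaussianReal 0 v (Ici 0) := by
  conv_lhs => rw [← neg_zero, ← gaussianReal_map_neg,
    Measure.map_apply measurable_neg measurableSet_Iic]
  congr 1
  ext a
  simp

theorem gaussianReal_Ici_zero (hv : v ≠ 0) : gaussianReal 0 v (Ici 0) = 2⁻¹ := by
  have := nullSingletonClass_gaussianReal (μ := 0) hv
  have htotal : gaussianReal 0 v (Ici 0) + gaussianReal 0 v (Ici 0) = 1 := by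
    nth_rewrite 1 [← gaussianReal_Iic_zero_eq_Ici]
    rw [← measure_congr Ioi_ae_eq_Ici,
      ← measure_union (Iic_disjoint_Ioi le_rfl) measurableSet_Ioi,
      Iic_union_Ioi, measure_univ]
  rw [← two_mul, mul_comm] at htotal
  exact ENNReal.eq_inv_of_mul_eq_one_left htotal

theorem gaussianReal_Iic_zero (hv : v ≠ 0) : gaussianReal 0 v (Iic 0) = 2⁻¹ :=
  gaussianReal_Iic_zero_eq_Ici.trans (gaussianReal_Ici_zero hv)

theorem ofReal_one_div_two_pow_pred {d : ℕ} (hd : 1 ≤ d) :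
    ENNReal.ofReal (1 / 2 ^ (d - 1)) = 2⁻¹ ^ d + 2⁻¹ ^ d := by
  obtain ⟨k, rfl⟩ := Nat.exists_eq_add_of_le' hd
  rw [Nat.add_sub_cancel, one_div, ← inv_pow, ENNReal.ofReal_pow (by norm_num),
    ENNReal.ofReal_inv_of_pos two_pos, ENNReal.ofReal_ofNat, ← two_mul, pow_succ', ← mul_assoc,
    ENNReal.mul_inv_cancel two_ne_zero ENNReal.ofNat_ne_top, one_mul]

end GaussianDesign

namespace SingleExample

open Set

variable {d : ℕ} {v : NNReal}

theorem measure_goodDesigns_compl_le (istar : Fin d) (hv : v ≠ 0) :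
    Measure.pi (fun _ : Fin d => gaussianReal 0 v) (goodDesigns istar)ᶜ ≤
      2⁻¹ ^ d + 2⁻¹ ^ d := by
  have := nullSingletonClass_gaussianReal (μ := 0) hv
  set μ := Measure.pi fun _ : Fin d => gaussianReal 0 v
  set N := {x : Fin d → ℝ | x istar = 0} ∪
    ⋃ j ∈ ({istar}ᶜ : Set (Fin d)), {x | x j = x istar}
  have hsub : (goodDesigns istar)ᶜ ⊆
      ((Set.univ.pi fun _ => Ici 0) ∪ (Set.univ.pi fun _ => Iic 0)) ∪ N := by
    intro x hx
    by_cases h0 : x istar = 0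
    · exact Or.inr (Or.inl h0)
    by_cases hsame : ∃ j ≠ istar, x j = x istar
    · obtain ⟨j, hj, hjx⟩ := hsame
      exact Or.inr (Or.inr (mem_biUnion hj hjx))
    push Not at hsame
    have hsign : ∀ j, 0 ≤ x j * x istar := by
      by_contra! h
      exact hx ⟨h, hsame⟩
    rcases Ne.lt_or_gt h0 with hneg | hpos
    · exact Or.inl (Or.inr fun j _ => nonpos_of_mul_nonneg_left (hsign j) hneg)
    · exact Or.inl (Or.inl fun j _ => nonneg_of_mul_nonneg_left (hsign j) hpos)
  have hnull : μ N = 0 :=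
    measure_union_null (Measure.pi_hyperplane _ istar 0)
      (measure_biUnion_null_iff (to_countable _) |>.2 fun j hj => measure_pi_eval_eq_eval _ hj)
  calc μ (goodDesigns istar)ᶜ
      ≤ μ (Set.univ.pi fun _ => Ici 0) + μ (Set.univ.pi fun _ => Iic 0) := by
        refine (measure_mono hsub).trans ((measure_union_le _ _).trans ?_)
        rw [hnull, add_zero]
        exact measure_union_le _ _
    _ = 2⁻¹ ^ d + 2⁻¹ ^ d := by
        simp only [μ, Measure.pi_pi, gaussianReal_Ici_zero hv, gaussianReal_Iic_zero hv,
          Finset.prod_const, Finset.card_univ, Fintype.card_fin]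

theorem one_sub_le_measure_goodDesigns (istar : Fin d) (hv : v ≠ 0) :
    1 - ENNReal.ofReal (1 / 2 ^ (d - 1)) ≤
      Measure.pi (fun _ : Fin d => gaussianReal 0 v) (goodDesigns istar) := by
  rw [ofReal_one_div_two_pow_pred istar.pos, tsub_le_iff_right,
    ← measure_univ (μ := Measure.pi fun _ : Fin d => gaussianReal 0 v)]
  exact (measure_univ_le_add_compl _).trans
    (add_le_add le_rfl (measure_goodDesigns_compl_le istar hv))

end SingleExample

theorem stmt11_general (d : ℕ) (Sstar : Finset (Fin d)) (hS : Sstar.card = 1) :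
    1 - ENNReal.ofReal (1 / 2 ^ (d - 1)) ≤
      (Measure.pi fun _ : Fin d => gaussianReal 0 1)
        {x : Fin d → ℝ |
          ∃ ζ : ℝ, 0 < ζ ∧ ζ < 1 ∧
            ∀ t : ℕ, 2 * Real.log 2 / (-Real.log (1 - ζ)) ≤ (t : ℝ) →
              ∀ vote : (N : ℕ) → (Fin N → Finset (Fin d)) → Finset (Fin d),
                (∀ (N : ℕ) (g : Fin N → Finset (Fin d)) (S : Finset (Fin d)),
                  countVotes g S ≤ countVotes g (vote N g)) →
                Filter.Tendsto
                  (fun N : ℕ =>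
                    mvRecoverProb
                      (chainProb (Matrix.of fun _ : Fin 1 => x)
                        (fun _ : Fin 1 => x ⬝ᵥ indicatorVec Sstar) 1 t)
                      N (vote N) Sstar)
                  Filter.atTop (nhds 1)} := by
  obtain ⟨istar, rfl⟩ := Finset.card_eq_one.1 hS
  refine (SingleExample.one_sub_le_measure_goodDesigns istar one_ne_zero).trans
    (measure_mono fun x hx => ?_)
  obtain ⟨ζ, hζ0, hζ1, hζ⟩ := SingleExample.exists_chain_target_ge hx
  refine ⟨ζ, hζ0, hζ1, fun t ht vote hvote => ?_⟩
  exact tendsto_mvRecoverProb _ (SingleExample.chain_nonneg x istar t)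
    (SingleExample.sum_chain hx t) (by linarith [hζ t ht]) vote hvote

theorem stmt11 (d : ℕ) (hd : 1 < d) (Sstar : Finset (Fin d)) (hS : Sstar.card = 1) :
    1 - ENNReal.ofReal (1 / 2 ^ (d - 1)) ≤
      (Measure.pi fun _ : Fin d => gaussianReal 0 1)
        {x : Fin d → ℝ |
          ∃ ζ : ℝ, 0 < ζ ∧ ζ < 1 ∧
            ∀ t : ℕ, 2 * Real.log 2 / (-Real.log (1 - ζ)) ≤ (t : ℝ) →
              ∀ vote : (N : ℕ) → (Fin N → Finset (Fin d)) → Finset (Fin d),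
                (∀ (N : ℕ) (g : Fin N → Finset (Fin d)) (S : Finset (Fin d)),
                  countVotes g S ≤ countVotes g (vote N g)) →
                Filter.Tendsto
                  (fun N : ℕ =>
                    mvRecoverProb
                      (chainProb (Matrix.of fun _ : Fin 1 => x)
                        (fun _ : Fin 1 => x ⬝ᵥ indicatorVec Sstar) 1 t)
                      N (vote N) Sstar)
                  Filter.atTop (nhds 1)} :=
  stmt11_general d Sstar hS
end

section
/- Let A ∈ ℝ^{n×n} be symmetric positive semidefinite with (η/n)·‖A‖₂ ≤ 1, let σ ∈ (0,1), η > 0, and let t ≥ σ^{-2}·log 2 be an integer. Define G := ( (σ²n/((1−σ²)η))·I_n + A )·( I_n − (1−σ²)^t·(I_n − (η/n)A)^t )^{-1}. Then in the positive semidefinite (Loewner) order, (σ²n/((1−σ²)η))·I_n + A ⪯ G ⪯ (n/η)·( 2/t + (σ²/(1−σ²))·(1 + 2/t) )·I_n + A. -/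
open Matrix

lemma stmt13_scalar_aux (s μ : ℝ) (t : ℕ) (hs : 0 < s) (hs1 : s < 1)
    (hμ0 : 0 ≤ μ) (hμ1 : μ ≤ 1) (hst : Real.log 2 ≤ s * t) :
    (1 - s) ^ t * (1 - μ) ^ t ≤ 1 / 2 ∧
    (2 / t + s / (1 - s) * (1 + 2 / t) + μ) * ((1 - s) ^ t * (1 - μ) ^ t)
      ≤ 2 / t / (1 - s) := by
  have h1s : (0:ℝ) < 1 - s := by linarith
  have hlog2 : (0:ℝ) < Real.log 2 := Real.log_pos (by norm_num)
  have ht0 : (0:ℝ) < t := by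
    rcases Nat.eq_zero_or_pos t with h | h
    · exfalso; rw [h] at hst; norm_num at hst; nlinarith
    · exact_mod_cast h
  have hexp : (1 - s) ^ t ≤ Real.exp (-(s * t)) := by
    calc (1-s)^t ≤ (Real.exp (-s))^t := by
          apply pow_le_pow_left₀ h1s.le
          linarith [Real.add_one_le_exp (-s)]
      _ = Real.exp (-(s*(t:ℝ))) := by
          rw [← Real.exp_nat_mul]; ring_nf
  have hhalf : Real.exp (-(s * t)) ≤ 1/2 := by
    rw [show (1/2 : ℝ) = Real.exp (-(Real.log 2)) by
      rw [Real.exp_neg, Real.exp_log (by norm_num : (0:ℝ) < 2)]; norm_num]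
    exact Real.exp_le_exp.mpr (by linarith)
  have hspow : (0:ℝ) ≤ (1-s)^t := pow_nonneg h1s.le t
  have hμpow : (0:ℝ) ≤ (1-μ)^t := pow_nonneg (by linarith) t
  have hμpow1 : (1-μ)^t ≤ 1 := pow_le_one₀ (by linarith) (by linarith)
  refine ⟨?_, ?_⟩
  · calc (1-s)^t * (1-μ)^t ≤ (1-s)^t * 1 := mul_le_mul_of_nonneg_left hμpow1 hspow
      _ ≤ 1/2 := by rw [mul_one]; exact hexp.trans hhalf
  · obtain ⟨k, hk⟩ : ∃ k : ℝ, k = 2 / t + s / (1 - s) * (1 + 2 / t) := ⟨_, rfl⟩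
    rw [← hk]
    have hsd : (0:ℝ) ≤ s / (1-s) := div_nonneg hs.le h1s.le
    have hk0 : 0 ≤ k := by
      have h1 : (0:ℝ) ≤ 2/(t:ℝ) := by positivity
      have h2 : (0:ℝ) ≤ s/(1-s) * (1+2/(t:ℝ)) := mul_nonneg hsd (by positivity)
      rw [hk]; linarith
    have hkt : 2 ≤ k * t := by
      have hid : k * t = 2 + s/(1-s) * (t + 2) := by
        rw [hk]; field_simp
      nlinarith [mul_nonneg hsd (by positivity : (0:ℝ) ≤ (t:ℝ)+2)]
    have hstepA : (k + μ) * (1-μ)^t ≤ k := by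
      have hb : (1:ℝ) + t*μ ≤ (1+μ)^t := by
        have := one_add_mul_le_pow (a := μ) (by linarith) t
        linarith
      have hmm : (1+(t:ℝ)*μ) * (1-μ)^t ≤ 1 := by
        calc (1+(t:ℝ)*μ)*(1-μ)^t ≤ (1+μ)^t * (1-μ)^t :=
              mul_le_mul_of_nonneg_right hb hμpow
          _ = ((1+μ)*(1-μ))^t := (mul_pow _ _ _).symm
          _ ≤ 1 := pow_le_one₀ (by nlinarith) (by nlinarith)
      have h1 : k + μ ≤ k * (1 + t*μ) := by
        nlinarith [mul_le_mul_of_nonneg_right hkt hμ0]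
      calc (k+μ)*(1-μ)^t ≤ k*(1+(t:ℝ)*μ)*(1-μ)^t := mul_le_mul_of_nonneg_right h1 hμpow
        _ = k * ((1+(t:ℝ)*μ)*(1-μ)^t) := by ring
        _ ≤ k * 1 := mul_le_mul_of_nonneg_left hmm hk0
        _ = k := mul_one k
    have hstepB : k * (1-s)^t ≤ 2 / t / (1-s) := by
      have key : (2 + s*t) * (1-s)^t ≤ 2 := by
        have h2x : 2 + s*(t:ℝ) ≤ 2 * Real.exp (s*t) := by
          nlinarith [Real.add_one_le_exp (s*(t:ℝ))]
        calc (2+s*(t:ℝ))*(1-s)^t ≤ (2*Real.exp (s*t)) * Real.exp (-(s*t)) := by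
              apply mul_le_mul h2x hexp hspow (by positivity)
          _ = 2 := by rw [mul_assoc, ← Real.exp_add]; simp
      have hid : k * (1-s) * t = 2 + s*t := by
        rw [hk]; field_simp
        ring
      rw [div_div, le_div_iff₀ (by positivity)]
      calc k*(1-s)^t*((t:ℝ)*(1-s)) = (k*(1-s)*t)*(1-s)^t := by ring
        _ = (2+s*(t:ℝ))*(1-s)^t := by rw [hid]
        _ ≤ 2 := key
    calc (k+μ)*((1-s)^t*(1-μ)^t) = ((k+μ)*(1-μ)^t)*(1-s)^t := by ring
      _ ≤ k*(1-s)^t := mul_le_mul_of_nonneg_right hstepA hspow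
      _ ≤ 2/t/(1-s) := hstepB
lemma stmt13_up (σ η ν lam : ℝ) (t : ℕ) (hη : 0 < η) (hν : 0 < ν)
    (hs : 0 < σ^2) (hs1 : σ^2 < 1) (hst : Real.log 2 ≤ σ^2 * t)
    (hl0 : 0 ≤ lam) (hl1 : lam ≤ ν/η) :
    0 ≤ (ν/η * (2/(t:ℝ) + σ^2/(1-σ^2)*(1+2/(t:ℝ))) + lam)
        - (σ^2*ν/((1-σ^2)*η) + lam) * (1 - (1-σ^2)^t * (1 - η/ν*lam)^t)⁻¹ := by
  have h1s : (0:ℝ) < 1 - σ^2 := by linarith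
  have hlog2 : (0:ℝ) < Real.log 2 := Real.log_pos (by norm_num)
  have ht0 : (0:ℝ) < t := by nlinarith [Nat.cast_nonneg (α := ℝ) t]
  have htne : (t:ℝ) ≠ 0 := ht0.ne'
  have hμ0 : 0 ≤ η/ν * lam := mul_nonneg (by positivity) hl0
  have hμ1 : η/ν * lam ≤ 1 := by
    have h := mul_le_mul_of_nonneg_left hl1 (le_of_lt (by positivity : (0:ℝ) < η/ν))
    calc η/ν * lam ≤ η/ν * (ν/η) := h
      _ = 1 := by field_simp
  have hsc := stmt13_scalar_aux (σ^2) (η/ν * lam) t hs hs1 hμ0 hμ1 hst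
  have hd : (0:ℝ) < 1 - (1-σ^2)^t * (1 - η/ν*lam)^t := by linarith [hsc.1]
  rw [sub_nonneg, ← div_eq_mul_inv, div_le_iff₀ hd]
  have key := hsc.2
  have hνη : (0:ℝ) < ν/η := by positivity
  have key2 := mul_le_mul_of_nonneg_left key hνη.le
  have e1 : ν/η * (2/(t:ℝ)/(1-σ^2))
      = ν/η * (2/(t:ℝ) + σ^2/(1-σ^2)*(1+2/(t:ℝ))) - σ^2*ν/((1-σ^2)*η) := by
    field_simp
    ring
  have e2 : ν/η * ((2/(t:ℝ) + σ^2/(1-σ^2)*(1+2/(t:ℝ)) + η/ν * lam)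
        * ((1-σ^2)^t * (1 - η/ν * lam)^t))
      = (ν/η * (2/(t:ℝ) + σ^2/(1-σ^2)*(1+2/(t:ℝ))) + lam)
        * ((1-σ^2)^t * (1 - η/ν * lam)^t) := by
    have hl : ν/η * (η/ν * lam) = lam := by field_simp
    calc ν/η * ((2/(t:ℝ) + σ^2/(1-σ^2)*(1+2/(t:ℝ)) + η/ν * lam)
          * ((1-σ^2)^t * (1 - η/ν * lam)^t))
        = (ν/η * (2/(t:ℝ) + σ^2/(1-σ^2)*(1+2/(t:ℝ))) + ν/η * (η/ν * lam))
          * ((1-σ^2)^t * (1 - η/ν * lam)^t) := by ring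
      _ = _ := by rw [hl]
  rw [e2, e1] at key2
  nlinarith [key2]

open Matrix

section conj
variable {n : ℕ} {U : Matrix (Fin n) (Fin n) ℝ}

lemma stmt13_conj_mul (h1 : star U * U = 1) (f g : Fin n → ℝ) :
    (U * diagonal f * star U) * (U * diagonal g * star U)
      = U * diagonal (f * g) * star U := by
  have e : (U * diagonal f * star U) * (U * diagonal g * star U)
      = U * (diagonal f * ((star U * U) * (diagonal g * star U))) := by
    simp only [Matrix.mul_assoc]
  rw [e, h1, one_mul, ← Matrix.mul_assoc (diagonal f), diagonal_mul_diagonal,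
    ← Matrix.mul_assoc]
  rfl

lemma stmt13_conj_add (f g : Fin n → ℝ) :
    (U * diagonal f * star U) + (U * diagonal g * star U)
      = U * diagonal (f + g) * star U := by
  rw [← Matrix.add_mul, ← Matrix.mul_add, diagonal_add]
  rfl

lemma stmt13_conj_sub (f g : Fin n → ℝ) :
    (U * diagonal f * star U) - (U * diagonal g * star U)
      = U * diagonal (f - g) * star U := by
  rw [← Matrix.sub_mul, ← Matrix.mul_sub, diagonal_sub]
  rfl

lemma stmt13_conj_smul (c : ℝ) (f : Fin n → ℝ) :
    c • (U * diagonal f * star U) = U * diagonal (c • f) * star U := by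
  rw [diagonal_smul]
  simp only [Matrix.smul_mul, Matrix.mul_smul]

lemma stmt13_conj_one (h2 : U * star U = 1) :
    U * diagonal (1 : Fin n → ℝ) * star U = 1 := by
  rw [show (1 : Fin n → ℝ) = fun _ => (1:ℝ) from rfl, diagonal_one, Matrix.mul_one, h2]

lemma stmt13_conj_pow (h1 : star U * U = 1) (h2 : U * star U = 1)
    (f : Fin n → ℝ) (k : ℕ) :
    (U * diagonal f * star U) ^ k = U * diagonal (f ^ k) * star U := by
  induction k with
  | zero => rw [pow_zero, pow_zero]; exact (stmt13_conj_one h2).symm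
  | succ m ih => rw [pow_succ, ih, stmt13_conj_mul h1, ← pow_succ]

lemma stmt13_conj_psd (h1 : star U * U = 1) (f : Fin n → ℝ) :
    (U * diagonal f * star U).PosSemidef ↔ ∀ i, 0 ≤ f i := by
  constructor
  · intro hp
    rw [← posSemidef_diagonal_iff]
    have h := hp.conjTranspose_mul_mul_same U
    rw [← Matrix.star_eq_conjTranspose] at h
    have e : star U * (U * diagonal f * star U) * U = diagonal f := by
      calc star U * (U * diagonal f * star U) * U
          = (star U * U) * (diagonal f * (star U * U)) := by
            simp only [Matrix.mul_assoc]
        _ = diagonal f := by rw [h1, Matrix.one_mul, Matrix.mul_one]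
    rwa [e] at h
  · intro hf
    have h := (posSemidef_diagonal_iff.mpr hf).mul_mul_conjTranspose_same U
    rwa [← Matrix.star_eq_conjTranspose] at h

lemma stmt13_conj_inv (h1 : star U * U = 1) (h2 : U * star U = 1)
    (f : Fin n → ℝ) (hf : ∀ i, f i ≠ 0) :
    (U * diagonal f * star U)⁻¹ = U * diagonal f⁻¹ * star U := by
  apply Matrix.inv_eq_right_inv
  rw [stmt13_conj_mul h1]
  rw [show (f * f⁻¹ : Fin n → ℝ) = 1 by
    funext i; exact mul_inv_cancel₀ (hf i)]
  exact stmt13_conj_one h2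

end conj


/- STATEMENT 13: Loewner-order bounds for the matrix
G := ((σ²n/((1−σ²)η))·I + A)·(I − (1−σ²)^t·(I − (η/n)A)^t)⁻¹,
where A is symmetric PSD with (η/n)·‖A‖₂ ≤ 1 (stated as (n/η)·I − A ⪰ 0),
σ ∈ (0,1), η > 0 and t ≥ σ⁻²·log 2.  `M ⪯ M'` is stated as `(M' - M).PosSemidef`. -/

open Matrix

theorem stmt13 (n : ℕ) (hn : 0 < n) (A : Matrix (Fin n) (Fin n) ℝ)
    (hA : A.PosSemidef) (η σ : ℝ) (hη : 0 < η) (hσ : 0 < σ) (hσ1 : σ < 1)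
    (hnorm : ((((n : ℝ) / η) • (1 : Matrix (Fin n) (Fin n) ℝ)) - A).PosSemidef)
    (t : ℕ) (ht : (σ ^ 2)⁻¹ * Real.log 2 ≤ (t : ℝ)) :
    let G : Matrix (Fin n) (Fin n) ℝ :=
      ((σ ^ 2 * n / ((1 - σ ^ 2) * η)) • (1 : Matrix (Fin n) (Fin n) ℝ) + A) *
        ((1 : Matrix (Fin n) (Fin n) ℝ) -
          (1 - σ ^ 2) ^ t • ((1 : Matrix (Fin n) (Fin n) ℝ) - (η / n) • A) ^ t)⁻¹
    (G - ((σ ^ 2 * n / ((1 - σ ^ 2) * η)) • (1 : Matrix (Fin n) (Fin n) ℝ) + A)).PosSemidef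
    ∧ ((((n : ℝ) / η * (2 / (t : ℝ) + (σ ^ 2 / (1 - σ ^ 2)) * (1 + 2 / (t : ℝ)))) •
          (1 : Matrix (Fin n) (Fin n) ℝ) + A) - G).PosSemidef := by
  intro G
  have hn' : ((n:ℝ)) ≠ 0 := Nat.cast_ne_zero.mpr hn.ne'
  have hnpos : (0:ℝ) < n := by exact_mod_cast hn
  have hη' : η ≠ 0 := hη.ne'
  have hs : 0 < σ^2 := by positivity
  have hs1 : σ^2 < 1 := by nlinarith
  have h1s : (0:ℝ) < 1 - σ^2 := by linarith
  have hlog2 : (0:ℝ) < Real.log 2 := Real.log_pos (by norm_num)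
  have hst : Real.log 2 ≤ σ^2 * t := by
    nlinarith [mul_le_mul_of_nonneg_left ht hs.le, mul_inv_cancel₀ hs.ne']
  have ht0 : (0:ℝ) < t := by nlinarith [Nat.cast_nonneg (α := ℝ) t]
  have htne : (t:ℝ) ≠ 0 := ht0.ne'
  have hH : A.IsHermitian := hA.isHermitian
  set U : Matrix (Fin n) (Fin n) ℝ := (hH.eigenvectorUnitary : Matrix (Fin n) (Fin n) ℝ)
    with hUdef
  have hU1 : star U * U = 1 := mem_unitaryGroup_iff'.mp hH.eigenvectorUnitary.2
  have hU2 : U * star U = 1 := mem_unitaryGroup_iff.mp hH.eigenvectorUnitary.2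
  set ev : Fin n → ℝ := hH.eigenvalues with hevdef
  have hspec : A = U * diagonal ev * star U := by
    simpa using hH.spectral_theorem
  have hev0 : ∀ i, 0 ≤ ev i := fun i => hA.eigenvalues_nonneg i
  have hAd : star U * A * U = diagonal ev := by
    conv_lhs => rw [hspec]
    calc star U * (U * diagonal ev * star U) * U
        = (star U * U) * (diagonal ev * (star U * U)) := by simp only [Matrix.mul_assoc]
      _ = diagonal ev := by rw [hU1, Matrix.one_mul, Matrix.mul_one]
  have hev_le : ∀ i, ev i ≤ (n:ℝ)/η := by
    have h := hnorm.conjTranspose_mul_mul_same U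
    rw [← Matrix.star_eq_conjTranspose] at h
    have e1 : star U * (((n:ℝ)/η) • (1:Matrix (Fin n) (Fin n) ℝ)) * U
        = ((n:ℝ)/η) • (1:Matrix (Fin n) (Fin n) ℝ) := by
      rw [Matrix.mul_smul, Matrix.smul_mul, Matrix.mul_one, hU1]
    have e : star U * ((((n:ℝ)/η) • (1:Matrix (Fin n) (Fin n) ℝ)) - A) * U
        = diagonal (fun i => (n:ℝ)/η - ev i) := by
      rw [Matrix.mul_sub, Matrix.sub_mul, e1, hAd, Matrix.smul_one_eq_diagonal,
        diagonal_sub]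
    rw [e] at h
    intro i
    have := posSemidef_diagonal_iff.mp h i
    linarith
  -- the diagonal functions
  have hμ0 : ∀ i, 0 ≤ η/(n:ℝ) * ev i := fun i =>
    mul_nonneg (by positivity) (hev0 i)
  have hμ1 : ∀ i, η/(n:ℝ) * ev i ≤ 1 := by
    intro i
    have h := mul_le_mul_of_nonneg_left (hev_le i) (le_of_lt (by positivity : (0:ℝ) < η/n))
    calc η/(n:ℝ) * ev i ≤ η/(n:ℝ) * ((n:ℝ)/η) := h
      _ = 1 := by field_simp
  have hhalf : ∀ i, 1/2 ≤ 1 - (1-σ^2)^t * (1 - η/(n:ℝ) * ev i)^t := by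
    intro i
    have := (stmt13_scalar_aux (σ^2) (η/(n:ℝ) * ev i) t hs hs1 (hμ0 i) (hμ1 i) hst).1
    linarith
  have hd0 : ∀ i, (0:ℝ) < 1 - (1-σ^2)^t * (1 - η/(n:ℝ) * ev i)^t := by
    intro i; linarith [hhalf i]
  have hdne : ∀ i, (1 - (1-σ^2)^t * (1 - η/(n:ℝ) * ev i)^t) ≠ 0 := fun i => (hd0 i).ne'
  -- matrix identities
  have hBd : (1 : Matrix (Fin n) (Fin n) ℝ)
        - (1-σ^2)^t • ((1 : Matrix (Fin n) (Fin n) ℝ) - (η/(n:ℝ)) • A)^t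
      = U * diagonal (fun i => 1 - (1-σ^2)^t * (1 - η/(n:ℝ) * ev i)^t) * star U := by
    conv_lhs => rw [hspec, ← stmt13_conj_one hU2]
    rw [stmt13_conj_smul, stmt13_conj_sub, stmt13_conj_pow hU1 hU2, stmt13_conj_smul,
      stmt13_conj_sub]
    rfl
  have hC : (σ^2*(n:ℝ)/((1-σ^2)*η)) • (1 : Matrix (Fin n) (Fin n) ℝ) + A
      = U * diagonal (fun i => σ^2*(n:ℝ)/((1-σ^2)*η) + ev i) * star U := by
    conv_lhs => rw [hspec, ← stmt13_conj_one hU2]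
    rw [stmt13_conj_smul, stmt13_conj_add,
      show ((σ^2*(n:ℝ)/((1-σ^2)*η)) • (1 : Fin n → ℝ) + ev)
          = fun i => σ^2*(n:ℝ)/((1-σ^2)*η) + ev i by funext i; simp]
  have hK : ((n:ℝ)/η * (2/(t:ℝ) + σ^2/(1-σ^2)*(1+2/(t:ℝ)))) • (1 : Matrix (Fin n) (Fin n) ℝ) + A
      = U * diagonal (fun i => (n:ℝ)/η * (2/(t:ℝ) + σ^2/(1-σ^2)*(1+2/(t:ℝ))) + ev i)
          * star U := by
    conv_lhs => rw [hspec, ← stmt13_conj_one hU2]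
    rw [stmt13_conj_smul, stmt13_conj_add,
      show (((n:ℝ)/η * (2/(t:ℝ) + σ^2/(1-σ^2)*(1+2/(t:ℝ)))) • (1 : Fin n → ℝ) + ev)
          = fun i => (n:ℝ)/η * (2/(t:ℝ) + σ^2/(1-σ^2)*(1+2/(t:ℝ))) + ev i by funext i; simp]
  have hBinv : ((1 : Matrix (Fin n) (Fin n) ℝ)
        - (1-σ^2)^t • ((1 : Matrix (Fin n) (Fin n) ℝ) - (η/(n:ℝ)) • A)^t)⁻¹
      = U * diagonal (fun i => (1 - (1-σ^2)^t * (1 - η/(n:ℝ) * ev i)^t)⁻¹) * star U := by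
    rw [hBd, stmt13_conj_inv hU1 hU2 _ hdne]
    rfl
  have hG : G = U * diagonal (fun i =>
      (σ^2*(n:ℝ)/((1-σ^2)*η) + ev i) * (1 - (1-σ^2)^t * (1 - η/(n:ℝ) * ev i)^t)⁻¹)
      * star U := by
    show ((σ ^ 2 * n / ((1 - σ ^ 2) * η)) • (1 : Matrix (Fin n) (Fin n) ℝ) + A) *
        ((1 : Matrix (Fin n) (Fin n) ℝ) -
          (1 - σ ^ 2) ^ t • ((1 : Matrix (Fin n) (Fin n) ℝ) - (η / n) • A) ^ t)⁻¹ = _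
    rw [hC, hBinv, stmt13_conj_mul hU1]
    rfl
  constructor
  · rw [hG, hC, stmt13_conj_sub, stmt13_conj_psd hU1]
    intro i
    simp only [Pi.sub_apply]
    have hd := hd0 i
    have hdle : (1 - (1-σ^2)^t * (1 - η/(n:ℝ) * ev i)^t) ≤ 1 := by
      have h1 : (0:ℝ) ≤ (1-σ^2)^t := pow_nonneg h1s.le t
      have h2 : (0:ℝ) ≤ (1 - η/(n:ℝ) * ev i)^t := pow_nonneg (by linarith [hμ1 i]) t
      nlinarith
    have hcl : 0 ≤ σ^2*(n:ℝ)/((1-σ^2)*η) + ev i := by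
      have : 0 ≤ σ^2*(n:ℝ)/((1-σ^2)*η) := div_nonneg (by positivity) (by positivity)
      linarith [hev0 i]
    have hdd : (1 - (1-σ^2)^t * (1 - η/(n:ℝ) * ev i)^t)
        * (1 - (1-σ^2)^t * (1 - η/(n:ℝ) * ev i)^t)⁻¹ = 1 := mul_inv_cancel₀ (hdne i)
    have hdipos : (0:ℝ) < (1 - (1-σ^2)^t * (1 - η/(n:ℝ) * ev i)^t)⁻¹ := by positivity
    have hdi : 1 ≤ (1 - (1-σ^2)^t * (1 - η/(n:ℝ) * ev i)^t)⁻¹ := by nlinarith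
    nlinarith [mul_le_mul_of_nonneg_left hdi hcl]
  · rw [hG, hK, stmt13_conj_sub, stmt13_conj_psd hU1]
    intro i
    simp only [Pi.sub_apply]
    exact stmt13_up σ η n (ev i) t hη hnpos hs hs1 hst (hev0 i) (hev_le i)
end

section
/- For the binary sparse in-context regression task, suppose the event E₁ holds and (2k + σ_ε)/n^{1/4} < 1/3. Then for every reasoning length t ≥ 1: (i) the greedy-decoding iterate satisfies w_t^{greedy} = w*; and (ii) for the sampling-decoding Markov chain, for every previous state w ∈ W and every w' ∈ W with w' ≠ w*, P( w_t = w* | w_{t-1} = w ) > P( w_t = w' | w_{t-1} = w ), and consequently P( w_t = w* | w_0 ) > P( w_t = w' | w_0 ) for all w' ∈ W with w' ≠ w*, where W := {w ∈ {0,1}^d : ‖w‖₀ = k}. In particular, majority vote over sufficiently many sampled reasoning paths outputs w*. -/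
open Matrix Finset

open Function
open scoped Classical

namespace S19

variable {d : ℕ}

/-- Assumptions making `q` a "nice" probability vector separated along `Sstar`. -/
structure NiceQ (d k : ℕ) (Sstar : Finset (Fin d)) (q : Fin d → ℝ) : Prop where
  nonneg : ∀ i, 0 ≤ q i
  total : ∑ i, q i = 1
  part : ∀ T : Finset (Fin d), T.card < k → ∑ x ∈ T, q x < 1
  sep : ∀ a ∈ Sstar, ∀ b, b ∉ Sstar → q b < q a
  posStar : ∀ a ∈ Sstar, 0 < q a

lemma filter_lt_card {k : ℕ} (i : Fin k) :
    (Finset.univ.filter (fun j => j < i)).card = i.val := by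
  have : Finset.univ.filter (fun j => j < i) = Finset.Iio i := by ext j; simp
  rw [this, Fin.card_Iio]

/-- The product term in `sampleWoR`. -/
noncomputable def term {k : ℕ} (q : Fin d → ℝ) (e : Fin k → Fin d) : ℝ :=
  ∏ i : Fin k, q (e i) / (1 - ∑ j ∈ Finset.univ.filter (fun j => j < i), q (e j))

lemma denom_pos {k : ℕ} {q : Fin d → ℝ}
    (hpart : ∀ T : Finset (Fin d), T.card < k → ∑ x ∈ T, q x < 1)
    {e : Fin k → Fin d} (he : Injective e) (i : Fin k) :
    0 < 1 - ∑ j ∈ Finset.univ.filter (fun j => j < i), q (e j) := by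
  have h1 : ∑ j ∈ Finset.univ.filter (fun j => j < i), q (e j)
      = ∑ x ∈ (Finset.univ.filter (fun j => j < i)).image e, q x :=
    (Finset.sum_image (fun a _ b _ hab => he hab)).symm
  have h2 : ((Finset.univ.filter (fun j => j < i)).image e).card < k := by
    rw [Finset.card_image_of_injective _ he, filter_lt_card]
    exact i.isLt
  have := hpart _ h2
  linarith [h1 ▸ this]

lemma term_nonneg {k : ℕ} {q : Fin d → ℝ} (hq0 : ∀ i, 0 ≤ q i)
    (hpart : ∀ T : Finset (Fin d), T.card < k → ∑ x ∈ T, q x < 1)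
    {e : Fin k → Fin d} (he : Injective e) : 0 ≤ term q e :=
  Finset.prod_nonneg fun i _ => div_nonneg (hq0 _) (denom_pos hpart he i).le

lemma term_pos {k : ℕ} {q : Fin d → ℝ}
    (hpart : ∀ T : Finset (Fin d), T.card < k → ∑ x ∈ T, q x < 1)
    {e : Fin k → Fin d} (he : Injective e) (hpos : ∀ i, 0 < q (e i)) : 0 < term q e :=
  Finset.prod_pos fun i _ => div_pos (hpos _) (denom_pos hpart he i)


/-- Auxiliary quantity: total probability over injective sequences avoiding `A`. -/
noncomputable def W (q : Fin d → ℝ) (m : ℕ) (A : Finset (Fin d)) : ℝ :=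
  ∑ e : Fin m → Fin d,
    if Injective e ∧ ∀ i, e i ∉ A then
      ∏ i : Fin m, q (e i) /
        (1 - ∑ x ∈ A, q x - ∑ j ∈ Finset.univ.filter (fun j => j < i), q (e j))
    else 0

lemma W_eq_one {k : ℕ} {q : Fin d → ℝ} (hq0 : ∀ i, 0 ≤ q i) (hqsum : ∑ i, q i = 1)
    (hpart : ∀ T : Finset (Fin d), T.card < k → ∑ x ∈ T, q x < 1) :
    ∀ m (A : Finset (Fin d)), A.card + m ≤ k → W q m A = 1 := by
  intro m
  induction m with
  | zero =>
    intro A _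
    unfold W
    have h1 : ∀ e : Fin 0 → Fin d, Injective e := fun e a => a.elim0
    have h2 : ∀ e : Fin 0 → Fin d, ∀ i : Fin 0, e i ∉ A := fun e i => i.elim0
    have h3 : ∀ e : Fin 0 → Fin d,
        (if Injective e ∧ ∀ i, e i ∉ A then
          ∏ i : Fin 0, q (e i) /
            (1 - ∑ x ∈ A, q x - ∑ j ∈ Finset.univ.filter (fun j => j < i), q (e j))
        else 0) = 1 := fun e => by rw [if_pos ⟨h1 e, h2 e⟩]; simp
    rw [Finset.sum_congr rfl fun e _ => h3 e]
    simp
  | succ m ih =>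
    intro A hA
    have hAk : A.card < k := by omega
    have hsA : ∑ x ∈ A, q x < 1 := hpart A hAk
    have hden : (0:ℝ) < 1 - ∑ x ∈ A, q x := by linarith
    unfold W
    rw [← Equiv.sum_comp (Fin.consEquiv (fun _ : Fin (m + 1) => Fin d)), Fintype.sum_prod_type]
    have key : ∀ x : Fin d, ∀ e' : Fin m → Fin d,
        (if Injective (Fin.cons x e' : Fin (m+1) → Fin d) ∧
            (∀ i, (Fin.cons x e' : Fin (m+1) → Fin d) i ∉ A) then
          ∏ i : Fin (m+1), q ((Fin.cons x e' : Fin (m+1) → Fin d) i) /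
            (1 - ∑ x ∈ A, q x -
              ∑ j ∈ Finset.univ.filter (fun j => j < i), q ((Fin.cons x e' : Fin (m+1) → Fin d) j))
        else 0)
        = (if x ∈ A then 0 else
            (q x / (1 - ∑ x ∈ A, q x)) *
            (if Injective e' ∧ ∀ i, e' i ∉ insert x A then
              ∏ i : Fin m, q (e' i) /
                (1 - ∑ y ∈ insert x A, q y - ∑ j ∈ Finset.univ.filter (fun j => j < i), q (e' j))
            else 0)) := by
      intro x e'
      by_cases hxA : x ∈ A
      · rw [if_neg, if_pos hxA]
        rintro ⟨-, h2⟩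
        exact h2 0 (by simpa using hxA)
      · rw [if_neg hxA]
        have hcond : (Injective (Fin.cons x e' : Fin (m+1) → Fin d) ∧
              (∀ i, (Fin.cons x e' : Fin (m+1) → Fin d) i ∉ A))
            ↔ (Injective e' ∧ ∀ i, e' i ∉ insert x A) := by
          rw [Fin.cons_injective_iff]
          constructor
          · rintro ⟨⟨hxr, hinj⟩, hmem⟩
            refine ⟨hinj, fun i => ?_⟩
            simp only [Finset.mem_insert, not_or]
            exact ⟨fun h => hxr ⟨i, h⟩, by simpa using hmem i.succ⟩
          · rintro ⟨hinj, hmem⟩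
            have h1 : ∀ i, e' i ≠ x ∧ e' i ∉ A := by
              intro i; have := hmem i; simp only [Finset.mem_insert, not_or] at this; exact this
            refine ⟨⟨fun ⟨i, hi⟩ => (h1 i).1 hi, hinj⟩, fun i => ?_⟩
            refine Fin.cases ?_ ?_ i
            · simpa using hxA
            · intro j; simpa using (h1 j).2
        by_cases hC : Injective e' ∧ ∀ i, e' i ∉ insert x A
        · rw [if_pos (hcond.mpr hC), if_pos hC]
          rw [Fin.prod_univ_succ]
          have h0 : ∑ j ∈ Finset.univ.filter (fun j => j < (0 : Fin (m+1))),
              q ((Fin.cons x e' : Fin (m+1) → Fin d) j) = 0 := by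
            apply Finset.sum_eq_zero
            intro j hj
            simp only [Finset.mem_filter] at hj
            exact absurd hj.2 (Fin.not_lt_zero j)
          have hins : ∑ y ∈ insert x A, q y = q x + ∑ y ∈ A, q y := Finset.sum_insert hxA
          have hsum : ∀ i : Fin m,
              ∑ j ∈ Finset.univ.filter (fun j => j < Fin.succ i),
                  q ((Fin.cons x e' : Fin (m+1) → Fin d) j)
              = q x + ∑ j ∈ Finset.univ.filter (fun j => j < i), q (e' j) := by
            intro i
            rw [Finset.sum_filter, Fin.sum_univ_succ]
            simp only [Fin.cons_zero, Fin.cons_succ, Fin.succ_pos, if_pos, Fin.succ_lt_succ_iff]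
            rw [← Finset.sum_filter]
          rw [h0, sub_zero, Fin.cons_zero]
          congr 1
          refine Finset.prod_congr rfl fun i _ => ?_
          rw [hsum i, hins, Fin.cons_succ]
          ring_nf
        · rw [if_neg (fun h => hC (hcond.mp h)), if_neg hC, mul_zero]
    simp only [Fin.consEquiv_apply]
    calc (∑ x : Fin d, ∑ e' : Fin m → Fin d,
          if Injective (Fin.cons x e' : Fin (m+1) → Fin d) ∧
              (∀ i, (Fin.cons x e' : Fin (m+1) → Fin d) i ∉ A) then
            ∏ i : Fin (m+1), q ((Fin.cons x e' : Fin (m+1) → Fin d) i) /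
              (1 - ∑ x ∈ A, q x -
                ∑ j ∈ Finset.univ.filter (fun j => j < i),
                  q ((Fin.cons x e' : Fin (m+1) → Fin d) j))
          else 0)
        = ∑ x : Fin d, (if x ∈ A then 0 else q x / (1 - ∑ x ∈ A, q x)) := by
          refine Finset.sum_congr rfl fun x _ => ?_
          rw [Finset.sum_congr rfl fun e' _ => key x e']
          by_cases hxA : x ∈ A
          · simp [hxA]
          · simp only [if_neg hxA]
            rw [← Finset.mul_sum]
            have hW : (∑ e' : Fin m → Fin d,
                if Injective e' ∧ ∀ i, e' i ∉ insert x A then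
                  ∏ i : Fin m, q (e' i) /
                    (1 - ∑ y ∈ insert x A, q y -
                      ∑ j ∈ Finset.univ.filter (fun j => j < i), q (e' j))
                else 0) = W q m (insert x A) := rfl
            rw [hW, ih (insert x A) (by rw [Finset.card_insert_of_notMem hxA]; omega), mul_one]
      _ = 1 := by
          rw [← Finset.sum_add_sum_compl A]
          have e1 : ∑ x ∈ A, (if x ∈ A then 0 else q x / (1 - ∑ x ∈ A, q x)) = 0 :=
            Finset.sum_eq_zero fun x hx => if_pos hx
          have e2 : ∑ x ∈ Aᶜ, (if x ∈ A then 0 else q x / (1 - ∑ x ∈ A, q x))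
              = ∑ x ∈ Aᶜ, q x / (1 - ∑ x ∈ A, q x) :=
            Finset.sum_congr rfl fun x hx => if_neg (by simpa using hx)
          have e3 : ∑ x ∈ Aᶜ, q x = 1 - ∑ x ∈ A, q x := by
            have := Finset.sum_add_sum_compl A q
            linarith [this.symm ▸ hqsum]
          rw [e1, e2, zero_add, ← Finset.sum_div, e3, div_self (ne_of_gt hden)]

lemma sampleWoR_eq {k : ℕ} (q : Fin d → ℝ) (S : Finset (Fin d)) :
    sampleWoR k q S = ∑ e : Fin k → Fin d,
      if Injective e ∧ Finset.image e Finset.univ = S then term q e else 0 := rfl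

lemma sampleWoR_nonneg {k : ℕ} {q : Fin d → ℝ} (hq0 : ∀ i, 0 ≤ q i)
    (hpart : ∀ T : Finset (Fin d), T.card < k → ∑ x ∈ T, q x < 1) (S : Finset (Fin d)) :
    0 ≤ sampleWoR k q S := by
  rw [sampleWoR_eq]
  refine Finset.sum_nonneg fun e _ => ?_
  split_ifs with h
  · exact term_nonneg hq0 hpart h.1
  · exact le_refl 0

lemma sampleWoR_eq_zero {k : ℕ} {q : Fin d → ℝ} {S : Finset (Fin d)} (h : S.card ≠ k) :
    sampleWoR k q S = 0 := by
  rw [sampleWoR_eq]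
  refine Finset.sum_eq_zero fun e _ => if_neg ?_
  rintro ⟨hinj, him⟩
  exact h (by rw [← him, Finset.card_image_of_injective _ hinj, Finset.card_univ,
    Fintype.card_fin])

lemma exists_enum {k : ℕ} {S : Finset (Fin d)} (hc : S.card = k) :
    ∃ e : Fin k → Fin d, Injective e ∧ Finset.image e Finset.univ = S := by
  refine ⟨fun i => (S.orderIsoOfFin hc i : Fin d), ?_, ?_⟩
  · intro i j h
    exact (S.orderIsoOfFin hc).injective (Subtype.ext h)
  · ext x
    simp only [Finset.mem_image, Finset.mem_univ, true_and]
    constructor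
    · rintro ⟨i, rfl⟩
      exact (S.orderIsoOfFin hc i).2
    · intro hx
      obtain ⟨i, hi⟩ := (S.orderIsoOfFin hc).surjective ⟨x, hx⟩
      exact ⟨i, by rw [hi]⟩

lemma sampleWoR_pos {k : ℕ} {q : Fin d → ℝ} {S : Finset (Fin d)} (hq0 : ∀ i, 0 ≤ q i)
    (hpart : ∀ T : Finset (Fin d), T.card < k → ∑ x ∈ T, q x < 1)
    (hc : S.card = k) (hpos : ∀ c ∈ S, 0 < q c) : 0 < sampleWoR k q S := by
  obtain ⟨e, he, him⟩ := exists_enum hc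
  rw [sampleWoR_eq]
  refine Finset.sum_pos' (fun e' _ => ?_) ⟨e, Finset.mem_univ _, ?_⟩
  · split_ifs with h
    · exact term_nonneg hq0 hpart h.1
    · exact le_refl 0
  · rw [if_pos ⟨he, him⟩]
    exact term_pos hpart he fun i =>
      hpos _ (him ▸ Finset.mem_image_of_mem e (Finset.mem_univ i))

lemma sampleWoR_total {k : ℕ} {q : Fin d → ℝ} (hq0 : ∀ i, 0 ≤ q i) (hqsum : ∑ i, q i = 1)
    (hpart : ∀ T : Finset (Fin d), T.card < k → ∑ x ∈ T, q x < 1) :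
    ∑ S : Finset (Fin d), sampleWoR k q S = 1 := by
  have hW := W_eq_one hq0 hqsum hpart k ∅ (by simp)
  rw [← hW]
  unfold W
  have h1 : ∀ S : Finset (Fin d), sampleWoR k q S = ∑ e : Fin k → Fin d,
      if Injective e ∧ Finset.image e Finset.univ = S then term q e else 0 :=
    fun S => sampleWoR_eq q S
  rw [Finset.sum_congr rfl fun S _ => h1 S, Finset.sum_comm]
  refine Finset.sum_congr rfl fun e _ => ?_
  by_cases he : Injective e
  · rw [if_pos ⟨he, fun i => Finset.notMem_empty _⟩]
    have h2 : ∀ S : Finset (Fin d),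
        (if Injective e ∧ Finset.image e Finset.univ = S then term q e else 0)
        = (if Finset.image e Finset.univ = S then term q e else 0) := fun S => by
      by_cases h : Finset.image e Finset.univ = S
      · rw [if_pos h]; exact if_pos ⟨he, h⟩
      · exact if_congr (iff_of_false (fun hh : Injective e ∧ Finset.image e Finset.univ = S => h hh.2) h) rfl rfl
    rw [Finset.sum_congr rfl fun S _ => h2 S, Finset.sum_ite_eq, if_pos (Finset.mem_univ _)]
    unfold term
    refine Finset.prod_congr rfl fun i _ => ?_
    rw [Finset.sum_empty, sub_zero]
  · rw [if_neg (fun h : Injective e ∧ ∀ i : Fin k, e i ∉ (∅ : Finset (Fin d)) => he h.1)]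
    exact Finset.sum_eq_zero fun S _ =>
      if_neg (fun h : Injective e ∧ Finset.image e Finset.univ = S => he h.1)

lemma image_swap {S : Finset (Fin d)} {a b : Fin d} (hb : b ∈ S) (ha : a ∉ S) :
    S.image (Equiv.swap a b) = insert a (S.erase b) := by
  conv_lhs => rw [← Finset.insert_erase hb]
  rw [Finset.image_insert, Equiv.swap_apply_right]
  congr 1
  have h : ∀ x ∈ S.erase b, Equiv.swap a b x = x := by
    intro x hx
    have hxb : x ≠ b := Finset.ne_of_mem_erase hx
    have hxa : x ≠ a := fun h => ha (h ▸ Finset.mem_of_mem_erase hx)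
    exact Equiv.swap_apply_of_ne_of_ne hxa hxb
  rw [Finset.image_congr h]
  simp

lemma term_le_swap {k : ℕ} {q : Fin d → ℝ} {S : Finset (Fin d)} {a b : Fin d}
    (hq0 : ∀ i, 0 ≤ q i)
    (hpart : ∀ T : Finset (Fin d), T.card < k → ∑ x ∈ T, q x < 1)
    (hab : q b ≤ q a) {e : Fin k → Fin d} (he : Injective e)
    (him : Finset.image e Finset.univ = S) (ha : a ∉ S) :
    term q e ≤ term q (Equiv.swap a b ∘ e) := by
  have he' : Injective (Equiv.swap a b ∘ e) := (Equiv.injective _).comp he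
  have hmem : ∀ i, e i ∈ S := fun i => him ▸ Finset.mem_image_of_mem e (Finset.mem_univ i)
  have hena : ∀ i, e i ≠ a := fun i h => ha (h ▸ hmem i)
  have hqle : ∀ i, q (e i) ≤ q (Equiv.swap a b (e i)) := by
    intro i
    rcases eq_or_ne (e i) b with h | h
    · rw [h, Equiv.swap_apply_right]; exact hab
    · rw [Equiv.swap_apply_of_ne_of_ne (hena i) h]
  unfold term
  refine Finset.prod_le_prod (fun i _ => div_nonneg (hq0 _) (denom_pos hpart he i).le)
    (fun i _ => ?_)
  have hsle : ∑ j ∈ Finset.univ.filter (fun j => j < i), q (e j)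
      ≤ ∑ j ∈ Finset.univ.filter (fun j => j < i), q ((Equiv.swap a b ∘ e) j) :=
    Finset.sum_le_sum fun j _ => hqle j
  exact div_le_div₀ (le_trans (hq0 _) (hqle i)) (hqle i) (denom_pos hpart he' i)
    (by linarith)

lemma term_lt_swap {k : ℕ} {q : Fin d → ℝ} {S : Finset (Fin d)} {a b : Fin d}
    (hq0 : ∀ i, 0 ≤ q i)
    (hpart : ∀ T : Finset (Fin d), T.card < k → ∑ x ∈ T, q x < 1)
    (hab : q b < q a) {e : Fin k → Fin d} (he : Injective e)
    (him : Finset.image e Finset.univ = S) (hb : b ∈ S) (ha : a ∉ S)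
    (hpos : ∀ c ∈ insert a (S.erase b), 0 < q c) :
    term q e < term q (Equiv.swap a b ∘ e) := by
  have he' : Injective (Equiv.swap a b ∘ e) := (Equiv.injective _).comp he
  have hmem : ∀ i, e i ∈ S := fun i => him ▸ Finset.mem_image_of_mem e (Finset.mem_univ i)
  have hena : ∀ i, e i ≠ a := fun i h => ha (h ▸ hmem i)
  have hqle : ∀ i, q (e i) ≤ q (Equiv.swap a b (e i)) := by
    intro i
    rcases eq_or_ne (e i) b with h | h
    · rw [h, Equiv.swap_apply_right]; exact hab.le
    · rw [Equiv.swap_apply_of_ne_of_ne (hena i) h]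
  obtain ⟨i₀, -, hi₀⟩ := Finset.mem_image.mp (him ▸ hb : b ∈ Finset.image e Finset.univ)
  have himg' : ∀ i, (Equiv.swap a b ∘ e) i ∈ insert a (S.erase b) := by
    intro i
    rcases eq_or_ne (e i) b with h | h
    · rw [Function.comp_apply, h, Equiv.swap_apply_right]; exact Finset.mem_insert_self _ _
    · rw [Function.comp_apply, Equiv.swap_apply_of_ne_of_ne (hena i) h]
      exact Finset.mem_insert_of_mem (Finset.mem_erase.mpr ⟨h, hmem i⟩)
  rcases (hq0 b).lt_or_eq with hqb | hqb
  · have hpose : ∀ i, 0 < q (e i) := by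
      intro i
      rcases eq_or_ne (e i) b with h | h
      · rw [h]; exact hqb
      · exact hpos _ (Finset.mem_insert_of_mem (Finset.mem_erase.mpr ⟨h, hmem i⟩))
    unfold term
    refine Finset.prod_lt_prod (fun i _ => div_pos (hpose i) (denom_pos hpart he i))
      (fun i _ => ?_) ⟨i₀, Finset.mem_univ _, ?_⟩
    · have hsle : ∑ j ∈ Finset.univ.filter (fun j => j < i), q (e j)
          ≤ ∑ j ∈ Finset.univ.filter (fun j => j < i), q ((Equiv.swap a b ∘ e) j) :=
        Finset.sum_le_sum fun j _ => hqle j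
      exact div_le_div₀ (le_trans (hq0 _) (hqle i)) (hqle i) (denom_pos hpart he' i)
        (by linarith)
    · have hDeq : ∑ j ∈ Finset.univ.filter (fun j => j < i₀), q ((Equiv.swap a b ∘ e) j)
          = ∑ j ∈ Finset.univ.filter (fun j => j < i₀), q (e j) := by
        refine Finset.sum_congr rfl fun j hj => ?_
        have hjne : j ≠ i₀ := ne_of_lt (Finset.mem_filter.mp hj).2
        have hejb : e j ≠ b := fun h => hjne (he (h.trans hi₀.symm))
        rw [Function.comp_apply, Equiv.swap_apply_of_ne_of_ne (hena j) hejb]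
      rw [Function.comp_apply, hi₀, Equiv.swap_apply_right, hDeq]
      exact div_lt_div_of_pos_right hab (denom_pos hpart he i₀)
  · have hterm0 : term q e = 0 := by
      unfold term
      refine Finset.prod_eq_zero (Finset.mem_univ i₀) ?_
      rw [hi₀, ← hqb, zero_div]
    rw [hterm0]
    exact term_pos hpart he' fun i => hpos _ (himg' i)

lemma swap_reindex {k : ℕ} (q : Fin d → ℝ) {S : Finset (Fin d)} {a b : Fin d}
    (hb : b ∈ S) (ha : a ∉ S) :
    sampleWoR k q (insert a (S.erase b)) = ∑ e : Fin k → Fin d,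
      if Injective e ∧ Finset.image e Finset.univ = S
        then term q (Equiv.swap a b ∘ e) else 0 := by
  rw [sampleWoR_eq, ← Equiv.sum_comp (Equiv.arrowCongr (Equiv.refl (Fin k)) (Equiv.swap a b))]
  refine Finset.sum_congr rfl fun e _ => ?_
  have hEe : (Equiv.arrowCongr (Equiv.refl (Fin k)) (Equiv.swap a b)) e
      = Equiv.swap a b ∘ e := rfl
  rw [hEe]
  have hiff : (Injective (Equiv.swap a b ∘ e)
        ∧ Finset.image (Equiv.swap a b ∘ e) Finset.univ = insert a (S.erase b))
      ↔ (Injective e ∧ Finset.image e Finset.univ = S) := by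
    constructor
    · rintro ⟨h1, h2⟩
      have he : Injective e := fun u v huv => h1 (by
        show Equiv.swap a b (e u) = Equiv.swap a b (e v); rw [huv])
      refine ⟨he, ?_⟩
      apply Finset.image_injective (Equiv.swap a b).injective
      rw [← Finset.image_image] at h2
      rw [h2, image_swap hb ha]
    · rintro ⟨he, him⟩
      refine ⟨(Equiv.swap a b).injective.comp he, ?_⟩
      rw [← Finset.image_image, him, image_swap hb ha]
  by_cases hc : Injective e ∧ Finset.image e Finset.univ = S
  · rw [if_pos (hiff.mpr hc), if_pos hc]
  · rw [if_neg (fun h => hc (hiff.mp h)), if_neg hc]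

lemma sampleWoR_le_swap {k : ℕ} {q : Fin d → ℝ} {S : Finset (Fin d)} {a b : Fin d}
    (hq0 : ∀ i, 0 ≤ q i)
    (hpart : ∀ T : Finset (Fin d), T.card < k → ∑ x ∈ T, q x < 1)
    (hb : b ∈ S) (ha : a ∉ S) (hab : q b ≤ q a) :
    sampleWoR k q S ≤ sampleWoR k q (insert a (S.erase b)) := by
  rw [sampleWoR_eq, swap_reindex q hb ha]
  refine Finset.sum_le_sum fun e _ => ?_
  split_ifs with h
  · exact term_le_swap hq0 hpart hab h.1 h.2 ha
  · exact le_refl 0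

lemma sampleWoR_lt_swap {k : ℕ} {q : Fin d → ℝ} {S : Finset (Fin d)} {a b : Fin d}
    (hq0 : ∀ i, 0 ≤ q i)
    (hpart : ∀ T : Finset (Fin d), T.card < k → ∑ x ∈ T, q x < 1)
    (hb : b ∈ S) (ha : a ∉ S) (hab : q b < q a) (hc : S.card = k)
    (hpos : ∀ c ∈ insert a (S.erase b), 0 < q c) :
    sampleWoR k q S < sampleWoR k q (insert a (S.erase b)) := by
  rw [sampleWoR_eq, swap_reindex q hb ha]
  obtain ⟨e₀, he₀, him₀⟩ := exists_enum hc
  refine Finset.sum_lt_sum (fun e _ => ?_) ⟨e₀, Finset.mem_univ _, ?_⟩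
  · split_ifs with h
    · exact term_le_swap hq0 hpart hab.le h.1 h.2 ha
    · exact le_refl 0
  · rw [if_pos ⟨he₀, him₀⟩, if_pos ⟨he₀, him₀⟩]
    exact term_lt_swap hq0 hpart hab he₀ him₀ hb ha hpos

lemma sampleWoR_lt_star {k : ℕ} {q : Fin d → ℝ} {Sstar : Finset (Fin d)}
    (hq : NiceQ d k Sstar q) (hstar : Sstar.card = k) :
    ∀ m, ∀ S' : Finset (Fin d), (Sstar \ S').card ≤ m → S'.card = k → S' ≠ Sstar →
      sampleWoR k q S' < sampleWoR k q Sstar := by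
  intro m
  induction m with
  | zero =>
    intro S' hcard hk' hne
    exfalso
    have hsub : Sstar ⊆ S' :=
      Finset.sdiff_eq_empty_iff_subset.mp (Finset.card_eq_zero.mp (Nat.le_zero.mp hcard))
    exact hne (Finset.eq_of_subset_of_card_le hsub (by omega)).symm
  | succ m ih =>
    intro S' hcard hk' hne
    have hne1 : ¬ Sstar ⊆ S' := fun h =>
      hne (Finset.eq_of_subset_of_card_le h (by omega)).symm
    obtain ⟨a, haSt, haS'⟩ := Finset.not_subset.mp hne1
    have hne2 : ¬ S' ⊆ Sstar := fun h => hne (Finset.eq_of_subset_of_card_le h (by omega))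
    obtain ⟨b, hbS', hbSt⟩ := Finset.not_subset.mp hne2
    have hcard'' : (insert a (S'.erase b)).card = k := by
      rw [Finset.card_insert_of_notMem (fun h => haS' (Finset.mem_of_mem_erase h)),
        Finset.card_erase_of_mem hbS']
      have : 1 ≤ S'.card := Finset.card_pos.mpr ⟨b, hbS'⟩
      omega
    have hab : q b < q a := hq.sep a haSt b hbSt
    by_cases hEq : insert a (S'.erase b) = Sstar
    · have h := sampleWoR_lt_swap hq.nonneg hq.part hbS' haS' hab hk'
        (fun c hc => hq.posStar c (hEq ▸ hc))
      rwa [hEq] at h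
    · have hle := sampleWoR_le_swap hq.nonneg hq.part hbS' haS' hab.le
      have hsub : Sstar \ insert a (S'.erase b) ⊆ (Sstar \ S').erase a := by
        intro x hx
        obtain ⟨hxSt, hxS''⟩ := Finset.mem_sdiff.mp hx
        refine Finset.mem_erase.mpr ⟨fun h => hxS'' (by rw [h]; exact Finset.mem_insert_self a _), ?_⟩
        refine Finset.mem_sdiff.mpr ⟨hxSt, fun hxS' => ?_⟩
        have hxb : x ≠ b := fun h => hbSt (h ▸ hxSt)
        exact hxS'' (Finset.mem_insert_of_mem (Finset.mem_erase.mpr ⟨hxb, hxS'⟩))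
      have hmem_a : a ∈ Sstar \ S' := Finset.mem_sdiff.mpr ⟨haSt, haS'⟩
      have hcard2 : (Sstar \ insert a (S'.erase b)).card ≤ m := by
        have h1 := Finset.card_le_card hsub
        rw [Finset.card_erase_of_mem hmem_a] at h1
        have h2 : 1 ≤ (Sstar \ S').card := Finset.card_pos.mpr ⟨a, hmem_a⟩
        omega
      exact lt_of_le_of_lt hle (ih _ hcard2 hcard'' hEq)

lemma topK_eq {k : ℕ} {q : Fin d → ℝ} {Sstar : Finset (Fin d)}
    (hq : NiceQ d k Sstar q) (hstar : Sstar.card = k) {S : Finset (Fin d)}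
    (h : IsTopK k q S) : S = Sstar := by
  by_contra hne
  have h1 : ¬ S ⊆ Sstar := fun hsub =>
    hne (Finset.eq_of_subset_of_card_le hsub (le_of_eq (hstar.trans h.1.symm)))
  obtain ⟨b, hbS, hbSt⟩ := Finset.not_subset.mp h1
  have h2 : ¬ Sstar ⊆ S := fun hsub =>
    hne (Finset.eq_of_subset_of_card_le hsub (le_of_eq (h.1.trans hstar.symm))).symm
  obtain ⟨a, haSt, haS⟩ := Finset.not_subset.mp h2
  exact absurd (h.2 b hbS a haS) (not_le.mpr (hq.sep a haSt b hbSt))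

lemma niceQ_of_close {k : ℕ} {Sstar : Finset (Fin d)} (hstar : Sstar.card = k) (hk : 1 ≤ k)
    {v : Fin d → ℝ} {ε : ℝ} (hε0 : 0 ≤ ε) (hε : ε < 1/3)
    (hv : ∀ i, |v i - (if i ∈ Sstar then (1:ℝ) else 0)| ≤ ε) :
    NiceQ d k Sstar (clipNorm v) := by
  have hin : ∀ i ∈ Sstar, 1 - ε ≤ max (v i) 0 := by
    intro i hi
    have h := hv i
    rw [if_pos hi] at h
    have h2 := abs_le.mp h
    calc 1 - ε ≤ v i := by linarith [h2.1]
      _ ≤ max (v i) 0 := le_max_left _ _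
  have hout : ∀ i, i ∉ Sstar → max (v i) 0 ≤ ε := by
    intro i hi
    have h := hv i
    rw [if_neg hi] at h
    have h2 := abs_le.mp h
    exact max_le (by linarith [h2.2]) hε0
  have hZpos : 0 < ∑ i', max (v i') 0 := by
    have h1 : (k : ℝ) * (1 - ε) ≤ ∑ i ∈ Sstar, max (v i) 0 := by
      calc (k:ℝ)*(1-ε) = ∑ _i ∈ Sstar, (1-ε) := by
            rw [Finset.sum_const, hstar, nsmul_eq_mul]
        _ ≤ _ := Finset.sum_le_sum hin
    have h2 : ∑ i ∈ Sstar, max (v i) 0 ≤ ∑ i', max (v i') 0 :=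
      Finset.sum_le_sum_of_subset_of_nonneg (Finset.subset_univ _)
        (fun i _ _ => le_max_right _ _)
    have hk1 : (1:ℝ) ≤ k := by exact_mod_cast hk
    nlinarith
  have hq0 : ∀ i, 0 ≤ clipNorm v i := fun i =>
    div_nonneg (le_max_right _ _) hZpos.le
  have hcn : ∀ i, clipNorm v i = max (v i) 0 / ∑ i', max (v i') 0 := fun i => rfl
  have htotal : ∑ i, clipNorm v i = 1 := by
    rw [Finset.sum_congr rfl fun i _ => hcn i, ← Finset.sum_div, div_self hZpos.ne']
  have heps : ε < 1 - ε := by linarith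
  refine ⟨hq0, htotal, ?_, ?_, ?_⟩
  · intro T hT
    have hne : (Sstar \ T).Nonempty := by
      rw [Finset.sdiff_nonempty]
      intro hsub
      exact absurd (Finset.card_le_card hsub) (by omega)
    obtain ⟨a, ha⟩ := hne
    rw [Finset.mem_sdiff] at ha
    have hqa : 0 < clipNorm v a := by
      rw [hcn a]
      exact div_pos (lt_of_lt_of_le (by linarith) (hin a ha.1)) hZpos
    have h1 : ∑ x ∈ insert a T, clipNorm v x = clipNorm v a + ∑ x ∈ T, clipNorm v x :=
      Finset.sum_insert ha.2
    have h2 : ∑ x ∈ insert a T, clipNorm v x ≤ ∑ i, clipNorm v i :=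
      Finset.sum_le_sum_of_subset_of_nonneg (Finset.subset_univ _) (fun i _ _ => hq0 i)
    linarith
  · intro a ha b hb
    rw [hcn a, hcn b]
    exact div_lt_div_of_pos_right (by linarith [hout b hb, hin a ha]) hZpos
  · intro a ha
    rw [hcn a]
    exact div_pos (lt_of_lt_of_le (by linarith) (hin a ha)) hZpos


lemma sum_prod_pow {α : Type*} [Fintype α] (N : ℕ) (F : α → ℝ) :
    ∑ g : Fin N → α, ∏ j, F (g j) = (∑ s, F s) ^ N := by
  induction N with
  | zero => simp
  | succ N ih =>
    rw [← Equiv.sum_comp (Fin.consEquiv (fun _ : Fin (N + 1) => α)), Fintype.sum_prod_type]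
    simp only [Fin.consEquiv_apply]
    have h1 : ∀ x : α, ∀ g : Fin N → α,
        ∏ j : Fin (N+1), F ((Fin.cons x g : Fin (N+1) → α) j)
          = F x * ∏ j : Fin N, F (g j) := by
      intro x g
      rw [Fin.prod_univ_succ]
      simp
    calc ∑ x : α, ∑ g : Fin N → α, ∏ j : Fin (N+1), F ((Fin.cons x g : Fin (N+1) → α) j)
        = ∑ x : α, F x * ∑ g : Fin N → α, ∏ j : Fin N, F (g j) := by
          refine Finset.sum_congr rfl fun x _ => ?_
          rw [Finset.sum_congr rfl fun g _ => h1 x g, ← Finset.mul_sum]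
      _ = (∑ s, F s) ^ (N + 1) := by
          rw [ih, ← Finset.sum_mul]
          ring

lemma bad_bound (f : Finset (Fin d) → ℝ) (hf0 : ∀ s, 0 ≤ f s) (hf1 : ∑ s, f s = 1)
    (sstar s' : Finset (Fin d)) (hne : s' ≠ sstar) (hlt : f s' < f sstar) :
    ∃ ρ : ℝ, 0 ≤ ρ ∧ ρ < 1 ∧ ∀ N : ℕ,
      (∑ g : Fin N → Finset (Fin d), (∏ j, f (g j)) *
        (if countVotes g sstar ≤ countVotes g s' then 1 else 0)) ≤ ρ ^ N := by
  have hfs : 0 < f sstar := lt_of_le_of_lt (hf0 s') hlt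
  set θ : ℝ := (f s' / f sstar + 1) / 2 with hθdef
  have hfr : 0 ≤ f s' / f sstar := div_nonneg (hf0 s') hfs.le
  have hθ0 : 0 < θ := by rw [hθdef]; linarith
  have hθ1 : θ < 1 := by
    have h : f s' / f sstar < 1 := (div_lt_one hfs).mpr hlt
    rw [hθdef]; linarith
  set r : Finset (Fin d) → ℝ := fun s => if s = sstar then θ else if s = s' then θ⁻¹ else 1
    with hrdef
  have hr0 : ∀ s, 0 < r s := by
    intro s
    rw [hrdef]
    dsimp only
    split_ifs
    · exact hθ0
    · exact inv_pos.mpr hθ0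
    · exact one_pos
  set ρ := ∑ s, f s * r s with hρdef
  have hρ0 : 0 ≤ ρ := Finset.sum_nonneg fun s _ => mul_nonneg (hf0 s) (hr0 s).le
  have hρval : ρ = 1 + (θ - 1) * f sstar + (θ⁻¹ - 1) * f s' := by
    have hterm : ∀ s : Finset (Fin d), f s * r s
        = f s + (if s = sstar then (θ - 1) * f sstar else 0)
            + (if s = s' then (θ⁻¹ - 1) * f s' else 0) := by
      intro s
      rw [hrdef]
      dsimp only
      by_cases h1 : s = sstar
      · rw [if_pos h1, if_pos h1, if_neg (fun h : s = s' => hne (by rw [← h, h1])), h1]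
        ring
      · rw [if_neg h1, if_neg h1]
        by_cases h2 : s = s'
        · rw [if_pos h2, if_pos h2, h2]; ring
        · rw [if_neg h2, if_neg h2]; ring
    rw [hρdef, Finset.sum_congr rfl fun s _ => hterm s, Finset.sum_add_distrib,
      Finset.sum_add_distrib, hf1, Finset.sum_ite_eq' Finset.univ sstar,
      Finset.sum_ite_eq' Finset.univ s']
    simp
  have hρ1 : ρ < 1 := by
    have key : f s' < θ * f sstar := by
      have hval : θ * f sstar = (f s' + f sstar) / 2 := by
        rw [hθdef]; field_simp
      rw [hval]; linarith
    have hθinv : 1 < θ⁻¹ := by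
      have h := (one_lt_div hθ0).mpr hθ1
      rwa [one_div] at h
    have h2 : (θ⁻¹ - 1) * f s' < (θ⁻¹ - 1) * (θ * f sstar) :=
      mul_lt_mul_of_pos_left key (by linarith)
    have h3 : (θ⁻¹ - 1) * (θ * f sstar) = (1 - θ) * f sstar := by
      field_simp
    rw [hρval]
    nlinarith
  refine ⟨ρ, hρ0, hρ1, fun N => ?_⟩
  have hstep : ∀ g : Fin N → Finset (Fin d),
      (∏ j, f (g j)) * (if countVotes g sstar ≤ countVotes g s' then 1 else 0)
        ≤ ∏ j, (f (g j) * r (g j)) := by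
    intro g
    rw [Finset.prod_mul_distrib]
    by_cases hvg : countVotes g sstar ≤ countVotes g s'
    · rw [if_pos hvg, mul_one]
      have hrpow : ∀ j : Fin N, r (g j)
          = θ ^ (if g j = sstar then 1 else 0) * θ⁻¹ ^ (if g j = s' then 1 else 0) := by
        intro j
        rw [hrdef]
        dsimp only
        by_cases h1 : g j = sstar
        · rw [if_pos h1, if_pos h1, if_neg (fun h : g j = s' => hne (h ▸ h1))]
          simp
        · rw [if_neg h1, if_neg h1]
          by_cases h2 : g j = s'
          · rw [if_pos h2, if_pos h2]; simp
          · rw [if_neg h2, if_neg h2]; simp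
      have hA : ∑ j, (if g j = sstar then 1 else 0) = countVotes g sstar :=
        (Finset.card_filter _ _).symm
      have hB : ∑ j, (if g j = s' then 1 else 0) = countVotes g s' :=
        (Finset.card_filter _ _).symm
      have hprod_r : 1 ≤ ∏ j, r (g j) := by
        rw [Finset.prod_congr rfl fun j _ => hrpow j, Finset.prod_mul_distrib,
          Finset.prod_pow_eq_pow_sum, Finset.prod_pow_eq_pow_sum, hA, hB]
        have h1 : θ ^ (countVotes g s') * θ⁻¹ ^ (countVotes g s') = 1 := by
          rw [← mul_pow, mul_inv_cancel₀ hθ0.ne', one_pow]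
        have h2 : θ ^ (countVotes g s') ≤ θ ^ (countVotes g sstar) :=
          pow_le_pow_of_le_one hθ0.le hθ1.le hvg
        calc (1:ℝ) = θ ^ (countVotes g s') * θ⁻¹ ^ (countVotes g s') := h1.symm
          _ ≤ θ ^ (countVotes g sstar) * θ⁻¹ ^ (countVotes g s') :=
            mul_le_mul_of_nonneg_right h2 (pow_nonneg (inv_nonneg.mpr hθ0.le) _)
      calc ∏ j, f (g j) = (∏ j, f (g j)) * 1 := (mul_one _).symm
        _ ≤ (∏ j, f (g j)) * ∏ j, r (g j) :=
          mul_le_mul_of_nonneg_left hprod_r (Finset.prod_nonneg fun j _ => hf0 _)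
    · rw [if_neg hvg, mul_zero]
      exact mul_nonneg (Finset.prod_nonneg fun j _ => hf0 _)
        (Finset.prod_nonneg fun j _ => (hr0 _).le)
  calc (∑ g : Fin N → Finset (Fin d), (∏ j, f (g j)) *
        (if countVotes g sstar ≤ countVotes g s' then 1 else 0))
      ≤ ∑ g : Fin N → Finset (Fin d), ∏ j, (f (g j) * r (g j)) :=
        Finset.sum_le_sum fun g _ => hstep g
    _ = ρ ^ N := by rw [sum_prod_pow N (fun s => f s * r s)]

lemma mv_tendsto (f : Finset (Fin d) → ℝ) (hf0 : ∀ s, 0 ≤ f s) (hf1 : ∑ s, f s = 1)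
    (Sstar : Finset (Fin d)) (hdom : ∀ s, s ≠ Sstar → f s < f Sstar)
    (vote : (N : ℕ) → (Fin N → Finset (Fin d)) → Finset (Fin d))
    (hvote : ∀ (N : ℕ) (g : Fin N → Finset (Fin d)) (S : Finset (Fin d)),
      countVotes g S ≤ countVotes g (vote N g)) :
    Filter.Tendsto (fun N : ℕ => mvRecoverProb f N (vote N) Sstar)
      Filter.atTop (nhds 1) := by
  have hmv : ∀ N, mvRecoverProb f N (vote N) Sstar
      = ∑ g : Fin N → Finset (Fin d), (∏ j, f (g j)) *
          (if vote N g = Sstar then 1 else 0) := fun N => rfl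
  have hbb : ∀ s' : Finset (Fin d), ∃ ρ : ℝ, 0 ≤ ρ ∧ ρ < 1 ∧ (s' ≠ Sstar → ∀ N : ℕ,
      (∑ g : Fin N → Finset (Fin d), (∏ j, f (g j)) *
        (if countVotes g Sstar ≤ countVotes g s' then 1 else 0)) ≤ ρ ^ N) := by
    intro s'
    by_cases h : s' ≠ Sstar
    · obtain ⟨ρ, h0, h1, h2⟩ := bad_bound f hf0 hf1 Sstar s' h (hdom s' h)
      exact ⟨ρ, h0, h1, fun _ => h2⟩
    · exact ⟨0, le_refl 0, one_pos, fun h' => absurd h' h⟩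
  choose ρ hρ0 hρ1 hρb using hbb
  have hub : ∀ N, mvRecoverProb f N (vote N) Sstar ≤ 1 := by
    intro N
    rw [hmv N]
    calc ∑ g : Fin N → Finset (Fin d), (∏ j, f (g j)) * (if vote N g = Sstar then 1 else 0)
        ≤ ∑ g : Fin N → Finset (Fin d), ∏ j, f (g j) := by
          refine Finset.sum_le_sum fun g _ => ?_
          split_ifs
          · rw [mul_one]
          · rw [mul_zero]; exact Finset.prod_nonneg fun j _ => hf0 _
      _ = 1 := by rw [sum_prod_pow, hf1, one_pow]
  have hlb : ∀ N, 1 - (∑ s' ∈ Finset.univ.erase Sstar, ρ s' ^ N)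
      ≤ mvRecoverProb f N (vote N) Sstar := by
    intro N
    have h1 : (∑ g : Fin N → Finset (Fin d), (∏ j, f (g j)) *
            (if vote N g = Sstar then 0 else 1))
        + mvRecoverProb f N (vote N) Sstar = 1 := by
      rw [hmv N, ← Finset.sum_add_distrib]
      have hgg : ∀ g : Fin N → Finset (Fin d),
          (∏ j, f (g j)) * (if vote N g = Sstar then 0 else 1)
          + (∏ j, f (g j)) * (if vote N g = Sstar then 1 else 0) = ∏ j, f (g j) := by
        intro g; split_ifs <;> ring
      rw [Finset.sum_congr rfl fun g _ => hgg g, sum_prod_pow, hf1, one_pow]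
    have h2 : ∑ g : Fin N → Finset (Fin d), (∏ j, f (g j)) *
          (if vote N g = Sstar then 0 else 1)
        ≤ ∑ s' ∈ Finset.univ.erase Sstar, ρ s' ^ N := by
      have hpt : ∀ g : Fin N → Finset (Fin d),
          (∏ j, f (g j)) * (if vote N g = Sstar then 0 else 1)
          ≤ ∑ s' ∈ Finset.univ.erase Sstar, (∏ j, f (g j)) *
              (if countVotes g Sstar ≤ countVotes g s' then 1 else 0) := by
        intro g
        by_cases hv : vote N g = Sstar
        · rw [if_pos hv, mul_zero]
          exact Finset.sum_nonneg fun s' _ => by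
            split_ifs
            · rw [mul_one]; exact Finset.prod_nonneg fun j _ => hf0 _
            · rw [mul_zero]
        · rw [if_neg hv, mul_one]
          have hmem : vote N g ∈ Finset.univ.erase Sstar :=
            Finset.mem_erase.mpr ⟨hv, Finset.mem_univ _⟩
          have hone : (∏ j, f (g j)) *
              (if countVotes g Sstar ≤ countVotes g (vote N g) then 1 else 0)
              = ∏ j, f (g j) := by
            rw [if_pos (hvote N g Sstar), mul_one]
          have hnn : ∀ s' ∈ Finset.univ.erase Sstar,
              0 ≤ (∏ j, f (g j)) *
                (if countVotes g Sstar ≤ countVotes g s' then 1 else 0) := by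
            intro s' _
            split_ifs
            · rw [mul_one]; exact Finset.prod_nonneg fun j _ => hf0 _
            · rw [mul_zero]
          calc ∏ j, f (g j) = _ := hone.symm
            _ ≤ _ := Finset.single_le_sum hnn hmem
      calc ∑ g : Fin N → Finset (Fin d), (∏ j, f (g j)) *
            (if vote N g = Sstar then 0 else 1)
          ≤ ∑ g : Fin N → Finset (Fin d), ∑ s' ∈ Finset.univ.erase Sstar,
              (∏ j, f (g j)) * (if countVotes g Sstar ≤ countVotes g s' then 1 else 0) :=
            Finset.sum_le_sum fun g _ => hpt g
        _ = ∑ s' ∈ Finset.univ.erase Sstar, ∑ g : Fin N → Finset (Fin d),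
              (∏ j, f (g j)) * (if countVotes g Sstar ≤ countVotes g s' then 1 else 0) :=
            Finset.sum_comm
        _ ≤ ∑ s' ∈ Finset.univ.erase Sstar, ρ s' ^ N :=
            Finset.sum_le_sum fun s' hs' => hρb s' (Finset.ne_of_mem_erase hs') N
    linarith [h1, h2]
  have hlow : Filter.Tendsto (fun N : ℕ => 1 - (∑ s' ∈ Finset.univ.erase Sstar, ρ s' ^ N))
      Filter.atTop (nhds 1) := by
    have hsum0 : Filter.Tendsto
        (fun N : ℕ => ∑ s' ∈ Finset.univ.erase Sstar, ρ s' ^ N) Filter.atTop (nhds 0) := by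
      have := tendsto_finset_sum (Finset.univ.erase Sstar)
        (fun s' _ => tendsto_pow_atTop_nhds_zero_of_lt_one (hρ0 s') (hρ1 s'))
      simpa using this
    have := Filter.Tendsto.sub (tendsto_const_nhds (x := (1:ℝ)) (f := Filter.atTop)) hsum0
    simpa using this
  exact tendsto_of_tendsto_of_tendsto_of_le_of_le hlow tendsto_const_nhds hlb hub

end S19

/- STATEMENT 19: Assuming the event E₁ and (2k+σ_ε)/n^{1/4} < 1/3: (i) greedy decoding
equals w* at every step t ≥ 1; (ii) from every previous state the sampling-decoding
chain moves to w* with strictly larger probability than to any other state, and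
consequently the t-step distribution puts strictly more mass on w* than on any other
state; in particular majority vote over sufficiently many sampled reasoning paths
outputs w* (its recovery probability tends to 1 with the number of paths). -/

theorem stmt19 (n d k : ℕ) (hk : 1 ≤ k) (hkd : k < d) (hn : 0 < n)
    (σε : ℝ) (hσε : 0 ≤ σε)
    (X : Matrix (Fin n) (Fin d) ℝ) (y : Fin n → ℝ)
    (Sstar : Finset (Fin d)) (hS : Sstar.card = k)
    (hE1 : ∀ S' : Finset (Fin d), S'.card ≤ k → ∀ i : Fin d,
      |gradStep X y (indicatorVec S') i - indicatorVec Sstar i| ≤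
        (2 * k + σε) / (n : ℝ) ^ ((1 : ℝ) / 4))
    (hE1star : ∀ i : Fin d,
      |gradStep X y (indicatorVec Sstar) i - indicatorVec Sstar i| ≤
        σε / (n : ℝ) ^ ((1 : ℝ) / 4))
    (hsmall : (2 * k + σε) / (n : ℝ) ^ ((1 : ℝ) / 4) < 1 / 3) :
    -- (i) greedy decoding recovers w* at every step
    (∀ sel : (Fin d → ℝ) → Finset (Fin d), (∀ q, IsTopK k q (sel q)) →
      ∀ t : ℕ, 1 ≤ t → greedyIter X y k sel t = Sstar)
    -- (ii) one-step dominance of w* from every previous state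
    ∧ (∀ S : Finset (Fin d), S.card = k →
        ∀ S' : Finset (Fin d), S'.card = k → S' ≠ Sstar →
          transProb X y k S S' < transProb X y k S Sstar)
    ∧ (∀ S' : Finset (Fin d), S'.card = k → S' ≠ Sstar →
        transProb X y k ∅ S' < transProb X y k ∅ Sstar)
    -- consequently t-step dominance of w*
    ∧ (∀ t : ℕ, 1 ≤ t → ∀ S' : Finset (Fin d), S'.card = k → S' ≠ Sstar →
        chainProb X y k t S' < chainProb X y k t Sstar)
    -- in particular, majority vote with sufficiently many paths outputs w*
    ∧ (∀ t : ℕ, 1 ≤ t →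
        ∀ vote : (N : ℕ) → (Fin N → Finset (Fin d)) → Finset (Fin d),
          (∀ (N : ℕ) (g : Fin N → Finset (Fin d)) (S : Finset (Fin d)),
            countVotes g S ≤ countVotes g (vote N g)) →
          Filter.Tendsto
            (fun N : ℕ => mvRecoverProb (chainProb X y k t) N (vote N) Sstar)
            Filter.atTop (nhds 1)) := by
  have hε0 : 0 ≤ (2 * k + σε) / (n : ℝ) ^ ((1 : ℝ) / 4) :=
    div_nonneg (add_nonneg (by positivity) hσε) (Real.rpow_nonneg (Nat.cast_nonneg n) _)
  have hnice : ∀ S : Finset (Fin d), S.card ≤ k →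
      S19.NiceQ d k Sstar (clipNorm (gradStep X y (indicatorVec S))) := by
    intro S hC
    refine S19.niceQ_of_close hS hk hε0 hsmall (fun i => ?_)
    simpa [indicatorVec] using hE1 S hC i
  have htrans : ∀ S : Finset (Fin d), S.card ≤ k → ∀ S' : Finset (Fin d), S'.card = k →
      S' ≠ Sstar → transProb X y k S S' < transProb X y k S Sstar := by
    intro S hC S' h1 h2
    exact S19.sampleWoR_lt_star (hnice S hC) hS _ S' le_rfl h1 h2
  have htransnn : ∀ S : Finset (Fin d), S.card ≤ k → ∀ S', 0 ≤ transProb X y k S S' :=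
    fun S hC S' => S19.sampleWoR_nonneg (hnice S hC).nonneg (hnice S hC).part S'
  have htrans0 : ∀ S S' : Finset (Fin d), S'.card ≠ k → transProb X y k S S' = 0 :=
    fun S S' h => S19.sampleWoR_eq_zero h
  have htranspos : ∀ S : Finset (Fin d), S.card ≤ k → 0 < transProb X y k S Sstar :=
    fun S hC => S19.sampleWoR_pos (hnice S hC).nonneg (hnice S hC).part hS
      (hnice S hC).posStar
  have htranstot : ∀ S : Finset (Fin d), S.card ≤ k →
      ∑ S' : Finset (Fin d), transProb X y k S S' = 1 :=
    fun S hC => S19.sampleWoR_total (hnice S hC).nonneg (hnice S hC).total (hnice S hC).part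
  have hchain_zero : ∀ S : Finset (Fin d),
      chainProb X y k 0 S = if S = ∅ then 1 else 0 := fun _ => rfl
  have hchain_succ : ∀ t (S : Finset (Fin d)), chainProb X y k (t + 1) S
      = ∑ S' : Finset (Fin d), chainProb X y k t S' * transProb X y k S' S := fun _ _ => rfl
  have hsupp : ∀ t (S' : Finset (Fin d)), chainProb X y k t S' ≠ 0 → S'.card ≤ k := by
    intro t S' h
    cases t with
    | zero =>
      by_cases hS' : S' = ∅
      · rw [hS']; simp
      · rw [hchain_zero S', if_neg hS'] at h; exact absurd rfl h
    | succ t =>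
      by_cases hc : S'.card = k
      · omega
      · exfalso
        apply h
        rw [hchain_succ]
        exact Finset.sum_eq_zero fun S'' _ => by rw [htrans0 S'' S' hc, mul_zero]
  have hzero : ∀ t, 1 ≤ t → ∀ s : Finset (Fin d), s.card ≠ k →
      chainProb X y k t s = 0 := by
    intro t ht s hcs
    obtain ⟨u, rfl⟩ : ∃ u, t = u + 1 := ⟨t - 1, by omega⟩
    rw [hchain_succ]
    exact Finset.sum_eq_zero fun S'' _ => by rw [htrans0 S'' s hcs, mul_zero]
  have hnn : ∀ t (S' : Finset (Fin d)), 0 ≤ chainProb X y k t S' := by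
    intro t
    induction t with
    | zero =>
      intro S'
      rw [hchain_zero]
      split_ifs
      · exact zero_le_one
      · exact le_refl 0
    | succ t ih =>
      intro S'
      rw [hchain_succ]
      refine Finset.sum_nonneg fun S'' _ => ?_
      by_cases h0 : chainProb X y k t S'' = 0
      · rw [h0, zero_mul]
      · exact mul_nonneg (ih S'') (htransnn S'' (hsupp t S'' h0) S')
  have htermnn : ∀ t (S'' S' : Finset (Fin d)),
      0 ≤ chainProb X y k t S'' * transProb X y k S'' S' := by
    intro t S'' S'
    by_cases hz : chainProb X y k t S'' = 0
    · rw [hz, zero_mul]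
    · exact mul_nonneg (hnn t S'') (htransnn S'' (hsupp t S'' hz) S')
  have hpos : ∀ t, 1 ≤ t → 0 < chainProb X y k t Sstar := by
    intro t
    induction t with
    | zero => omega
    | succ t ih =>
      intro _
      rw [hchain_succ]
      rcases Nat.eq_zero_or_pos t with h0 | h0
      · subst h0
        refine Finset.sum_pos' (fun S'' _ => htermnn 0 S'' Sstar)
          ⟨∅, Finset.mem_univ _, ?_⟩
        rw [hchain_zero, if_pos rfl, one_mul]
        exact htranspos ∅ (by simp)
      · refine Finset.sum_pos' (fun S'' _ => htermnn t S'' Sstar)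
          ⟨Sstar, Finset.mem_univ _, ?_⟩
        exact mul_pos (ih h0) (htranspos Sstar hS.le)
  have hdomchain : ∀ t, 1 ≤ t → ∀ S' : Finset (Fin d), S'.card = k → S' ≠ Sstar →
      chainProb X y k t S' < chainProb X y k t Sstar := by
    intro t
    induction t with
    | zero => omega
    | succ t ih =>
      intro _ S' h1 h2
      rw [hchain_succ, hchain_succ]
      have hle : ∀ S'' ∈ (Finset.univ : Finset (Finset (Fin d))),
          chainProb X y k t S'' * transProb X y k S'' S'
          ≤ chainProb X y k t S'' * transProb X y k S'' Sstar := by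
        intro S'' _
        by_cases hz : chainProb X y k t S'' = 0
        · rw [hz, zero_mul, zero_mul]
        · exact mul_le_mul_of_nonneg_left (htrans S'' (hsupp t S'' hz) S' h1 h2).le
            (hnn t S'')
      rcases Nat.eq_zero_or_pos t with h0 | h0
      · subst h0
        refine Finset.sum_lt_sum hle ⟨∅, Finset.mem_univ _, ?_⟩
        rw [hchain_zero, if_pos rfl, one_mul, one_mul]
        exact htrans ∅ (by simp) S' h1 h2
      · refine Finset.sum_lt_sum hle ⟨Sstar, Finset.mem_univ _, ?_⟩
        exact mul_lt_mul_of_pos_left (htrans Sstar hS.le S' h1 h2) (hpos t h0)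
  have htot : ∀ t, ∑ S' : Finset (Fin d), chainProb X y k t S' = 1 := by
    intro t
    induction t with
    | zero =>
      rw [Finset.sum_congr rfl fun S _ => hchain_zero S,
        Finset.sum_ite_eq' Finset.univ (∅ : Finset (Fin d)) (fun _ => (1:ℝ))]
      simp
    | succ t ih =>
      rw [Finset.sum_congr rfl fun S _ => hchain_succ t S, Finset.sum_comm]
      calc ∑ S'' : Finset (Fin d), ∑ S : Finset (Fin d),
            chainProb X y k t S'' * transProb X y k S'' S
          = ∑ S'' : Finset (Fin d), chainProb X y k t S'' := by
            refine Finset.sum_congr rfl fun S'' _ => ?_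
            rw [← Finset.mul_sum]
            by_cases hz : chainProb X y k t S'' = 0
            · rw [hz, zero_mul]
            · rw [htranstot S'' (hsupp t S'' hz), mul_one]
        _ = 1 := ih
  refine ⟨?_, ?_, ?_, ?_, ?_⟩
  · intro sel hsel t ht
    induction t with
    | zero => omega
    | succ t ih =>
      have hprev : (greedyIter X y k sel t).card ≤ k := by
        rcases Nat.eq_zero_or_pos t with h0 | h0
        · subst h0
          show (∅ : Finset (Fin d)).card ≤ k
          simp
        · rw [ih h0]
          exact hS.le
      show sel (clipNorm (gradStep X y (indicatorVec (greedyIter X y k sel t)))) = Sstar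
      exact S19.topK_eq (hnice _ hprev) hS (hsel _)
  · intro S hSc S' h1 h2
    exact htrans S hSc.le S' h1 h2
  · intro S' h1 h2
    exact htrans ∅ (by simp) S' h1 h2
  · exact hdomchain
  · intro t ht vote hvote
    refine S19.mv_tendsto (chainProb X y k t) (hnn t) (htot t) Sstar ?_ vote hvote
    intro s hne
    by_cases hcs : s.card = k
    · exact hdomchain t ht s hcs hne
    · rw [hzero t ht s hcs]
      exact hpos t ht
end
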